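/- arXiv:2107.03410 — 8 statements merged into one kernel-verified Lean document; each statement's English description precedes it below -/
import Mathlib

section
/- Let n ≥ 1, d ≥ 1, let O be a d×d real orthogonal matrix, let G_O be the rotated hypercubic grid, let q ∈ [1,∞] with Hölder conjugate q', and let δ > 0. Then the number of points x ∈ G_O with ‖x‖_{q'} ≥ d^{1−1/q}·√(ln(2d/δ)/2) is at most δ·2^{nd}. (Equivalently, the approximate radius r_{G_O,δ}(q) is at most d^{1−1/q}·√(ln(2d/δ)/2).) -/
open scoped ENNReal Classical BigOperators

/-- The `ℓ_q`-norm of a vector in `ℝ^d`, for `q ∈ [1,∞]`. -/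
noncomputable def lqNorm {d : ℕ} (q : ℝ≥0∞) (v : Fin d → ℝ) : ℝ :=
  if q = ∞ then ⨆ j, |v j| else (∑ j, |v j| ^ q.toReal) ^ (1 / q.toReal)

/-- A real square matrix is orthogonal if `OᵀO = OOᵀ = I`. -/
def IsOrthogonalMat {d : ℕ} (O : Matrix (Fin d) (Fin d) ℝ) : Prop :=
  O.transpose * O = 1 ∧ O * O.transpose = 1

/-- The point of the rotated hypercubic grid `G_O` indexed by `k ∈ {0,…,2ⁿ-1}^d`,
namely `Oᵀx/2ⁿ` with `x_i = k_i + 1/2 - 2^{n-1}`. -/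
noncomputable def gridPoint (n d : ℕ) (O : Matrix (Fin d) (Fin d) ℝ)
    (k : Fin d → Fin (2 ^ n)) : Fin d → ℝ :=
  fun j => (∑ i, O i j * ((k i : ℝ) + 1 / 2 - 2 ^ n / 2)) / 2 ^ n

/-- The rotated hypercubic grid `G_O = {Oᵀx/2ⁿ : x ∈ {−2^{n−1}+1/2, …, 2^{n−1}−1/2}^d}`. -/
noncomputable def rotGrid (n d : ℕ) (O : Matrix (Fin d) (Fin d) ℝ) : Finset (Fin d → ℝ) :=
  Finset.univ.image (gridPoint n d O)

/-!
Write `ε(m) = (m + 1/2)/N - 1/2` for `m < N = 2ⁿ`. Coordinate `j` of the grid point indexed by `k`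
is `∑ᵢ O i j * ε(k i)`: a weighted sum of independent uniform variables with values symmetric
in `[-1/2, 1/2]`, whose weights form a unit column of `O`. Hoeffding's inequality bounds the
proportion of grid points with `|x_j| ≥ t` by `2 exp(-2t²)`. As `‖x‖_{q'} ≤ d^{1/q'} ‖x‖_∞` and
`1/q' = 1 - 1/q`, a union bound over the `d` coordinates leaves the proportion `2d exp(-2t²)`,
which is `δ` for the chosen `t` (and when `log (2d/δ) < 0`, `t = 0` and `2d < δ`).
-/

open Finset Real

section Hoeffding

variable {ι κ : Type*} [Fintype ι] [Fintype κ] [DecidableEq κ] {f : ι → ℝ} {b : ℝ}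

/-- Hoeffding's lemma for a family of values symmetric about `0`: symmetry turns the sum of
exponentials into a sum of `cosh`. -/
lemma sum_exp_mul_le_of_symm (e : ι ≃ ι) (hf_symm : ∀ i, f (e i) = -f i)
    (hf_le : ∀ i, |f i| ≤ b) (c : ℝ) :
    ∑ i, exp (c * f i) ≤ Fintype.card ι * exp (c ^ 2 * b ^ 2 / 2) := by
  have h_neg : ∑ i, exp (-(c * f i)) = ∑ i, exp (c * f i) := by
    rw [← e.sum_comp]
    simp only [hf_symm, mul_neg, neg_neg]
  calc ∑ i, exp (c * f i) = ∑ i, cosh (c * f i) := by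
        simp only [cosh_eq, ← sum_div, sum_add_distrib, h_neg]
        ring
    _ ≤ ∑ _i : ι, exp (c ^ 2 * b ^ 2 / 2) := by
      refine sum_le_sum fun i _ => (cosh_le_exp_half_sq _).trans (exp_le_exp.2 ?_)
      have : f i ^ 2 ≤ b ^ 2 := sq_le_sq' (abs_le.1 (hf_le i)).1 (abs_le.1 (hf_le i)).2
      nlinarith [sq_nonneg c]
    _ = Fintype.card ι * exp (c ^ 2 * b ^ 2 / 2) := by simp

lemma sum_exp_mul_sum_le_of_symm (e : ι ≃ ι) (hf_symm : ∀ i, f (e i) = -f i)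
    (hf_le : ∀ i, |f i| ≤ b) {a : κ → ℝ} (ha : ∑ j, a j ^ 2 ≤ 1) (c : ℝ) :
    ∑ k : κ → ι, exp (c * ∑ j, a j * f (k j))
      ≤ Fintype.card ι ^ Fintype.card κ * exp (c ^ 2 * b ^ 2 / 2) := by
  calc ∑ k : κ → ι, exp (c * ∑ j, a j * f (k j))
      = ∏ j, ∑ i, exp (c * a j * f i) := by
        simp only [Fintype.prod_sum, mul_sum, exp_sum, mul_assoc]
    _ ≤ ∏ j, (Fintype.card ι * exp ((c * a j) ^ 2 * b ^ 2 / 2)) :=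
      prod_le_prod (fun _ _ => by positivity)
        fun j _ => sum_exp_mul_le_of_symm e hf_symm hf_le (c * a j)
    _ = Fintype.card ι ^ Fintype.card κ * exp (c ^ 2 * b ^ 2 / 2 * ∑ j, a j ^ 2) := by
      rw [prod_mul_distrib, ← exp_sum, mul_sum]
      simp only [prod_const, card_univ]
      congr 2
      exact sum_congr rfl fun j _ => by ring
    _ ≤ Fintype.card ι ^ Fintype.card κ * exp (c ^ 2 * b ^ 2 / 2) := by
      gcongr
      exact mul_le_of_le_one_right (by positivity) ha

/-- Hoeffding's inequality in counting form, via the Chernoff bound with exponent `t / b ^ 2`. -/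
lemma card_le_abs_sum_le_of_symm (e : ι ≃ ι) (hf_symm : ∀ i, f (e i) = -f i)
    (hf_le : ∀ i, |f i| ≤ b) (hb : 0 < b) {a : κ → ℝ} (ha : ∑ j, a j ^ 2 ≤ 1)
    {t : ℝ} (ht : 0 ≤ t) :
    (#{k : κ → ι | t ≤ |∑ j, a j * f (k j)|} : ℝ)
      ≤ 2 * Fintype.card ι ^ Fintype.card κ * exp (-(t ^ 2 / (2 * b ^ 2))) := by
  set g : (κ → ι) → ℝ := fun k => ∑ j, a j * f (k j)
  set c := t / b ^ 2 with hc_def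
  have hc : 0 ≤ c := by positivity
  have h_markov : (#{k | t ≤ |g k|} : ℝ) * exp (c * t) ≤ ∑ k, exp (c * |g k|) := by
    rw [← nsmul_eq_mul]
    refine (card_nsmul_le_sum _ _ _ fun k hk => ?_).trans
      (sum_le_sum_of_subset_of_nonneg (filter_subset _ _) fun _ _ _ => (exp_pos _).le)
    exact exp_le_exp.2 (mul_le_mul_of_nonneg_left (mem_filter.1 hk).2 hc)
  have h_mgf : ∑ k, exp (c * |g k|)
      ≤ 2 * Fintype.card ι ^ Fintype.card κ * exp (c ^ 2 * b ^ 2 / 2) := by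
    calc ∑ k, exp (c * |g k|) ≤ ∑ k, (exp (c * g k) + exp (-c * g k)) := by
          refine sum_le_sum fun k _ => ?_
          simpa only [abs_mul, abs_of_nonneg hc, neg_mul] using exp_abs_le (c * g k)
      _ ≤ _ := by
        rw [sum_add_distrib, two_mul, add_mul]
        exact add_le_add (sum_exp_mul_sum_le_of_symm e hf_symm hf_le ha c)
          (by simpa using sum_exp_mul_sum_le_of_symm e hf_symm hf_le ha (-c))
  have h_exp : exp (c ^ 2 * b ^ 2 / 2) / exp (c * t) = exp (-(t ^ 2 / (2 * b ^ 2))) := by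
    rw [← exp_sub]
    congr 1
    rw [hc_def]
    field_simp
    ring
  rw [← h_exp, ← mul_div_assoc, le_div_iff₀ (exp_pos _)]
  exact h_markov.trans h_mgf

end Hoeffding

lemma sum_sq_apply_eq_one_of_transpose_mul_self {m : Type*} [Fintype m] [DecidableEq m]
    {O : Matrix m m ℝ} (hO : O.transpose * O = 1) (j : m) : ∑ i, O i j ^ 2 = 1 := by
  simpa [Matrix.mul_apply, sq] using congrFun (congrFun hO j) j

lemma lqNorm_le_of_abs_le {d : ℕ} {p : ℝ≥0∞} (hp : p ≠ 0) {x : Fin d → ℝ} {M : ℝ}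
    (hM0 : 0 ≤ M) (hM : ∀ j, |x j| ≤ M) : lqNorm p x ≤ (d : ℝ) ^ p⁻¹.toReal * M := by
  rw [lqNorm]
  split_ifs with hp_top
  · simpa [hp_top] using Real.iSup_le hM hM0
  · have hp_pos : 0 < p.toReal := ENNReal.toReal_pos hp hp_top
    calc (∑ j, |x j| ^ p.toReal) ^ (1 / p.toReal)
        ≤ (∑ _j : Fin d, M ^ p.toReal) ^ (1 / p.toReal) := by
          gcongr with j
          exact hM j
      _ = (d : ℝ) ^ p⁻¹.toReal * M := by
        rw [sum_const, card_univ, Fintype.card_fin, nsmul_eq_mul,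
          mul_rpow (by positivity) (by positivity), ENNReal.toReal_inv, one_div,
          rpow_rpow_inv hM0 hp_pos.ne']

lemma card_le_lqNorm_le_sum_card_le_abs {ι : Type*} [Fintype ι] {d : ℕ} (hd : 0 < d)
    {p : ℝ≥0∞} (hp : p ≠ 0) (g : ι → Fin d → ℝ) (t : ℝ) :
    #{k | (d : ℝ) ^ p⁻¹.toReal * t ≤ lqNorm p (g k)} ≤ ∑ j, #{k | t ≤ |g k j|} := by
  refine (card_le_card fun k hk => ?_).trans card_biUnion_le
  have : Nonempty (Fin d) := ⟨⟨0, hd⟩⟩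
  obtain ⟨j, hj⟩ := Finite.exists_max fun j => |g k j|
  have h_norm := (mem_filter.1 hk).2.trans (lqNorm_le_of_abs_le hp (abs_nonneg _) hj)
  exact mem_biUnion.2 ⟨j, mem_univ _, mem_filter.2 ⟨mem_univ _,
    le_of_mul_le_mul_left h_norm (rpow_pos_of_pos (Nat.cast_pos.2 hd) _)⟩⟩

lemma mul_exp_neg_two_mul_sqrt_log_div_sq_le {a δ : ℝ} (ha : 0 < a) (hδ : 0 < δ) :
    a * exp (-2 * √(log (a / δ) / 2) ^ 2) ≤ δ := by
  calc a * exp (-2 * √(log (a / δ) / 2) ^ 2) ≤ a * exp (-log (a / δ)) := by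
        rw [sq_sqrt']
        gcongr
        linarith [le_max_left (log (a / δ) / 2) 0]
    _ = δ := by
      rw [exp_neg, exp_log (div_pos ha hδ), inv_div]
      field_simp

noncomputable def gridCoord (N : ℕ) (m : Fin N) : ℝ := ((m : ℝ) + 1 / 2 - N / 2) / N

lemma gridCoord_rev {N : ℕ} (m : Fin N) : gridCoord N m.rev = -gridCoord N m := by
  rw [gridCoord, gridCoord, Fin.val_rev, Nat.cast_sub m.isLt]
  push_cast
  ring

lemma abs_gridCoord_le {N : ℕ} (m : Fin N) : |gridCoord N m| ≤ 1 / 2 := by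
  have hN : (0 : ℝ) < N := Nat.cast_pos.2 m.pos
  have hm : (m : ℝ) + 1 ≤ N := by exact_mod_cast m.isLt
  rw [gridCoord, abs_div, abs_of_pos hN, div_le_iff₀ hN, abs_le]
  constructor <;> linarith [(Nat.cast_nonneg m : (0 : ℝ) ≤ m)]

lemma gridPoint_apply (n d : ℕ) (O : Matrix (Fin d) (Fin d) ℝ) (k : Fin d → Fin (2 ^ n))
    (j : Fin d) : gridPoint n d O k j = ∑ i, O i j * gridCoord (2 ^ n) (k i) := by
  simp [gridPoint, gridCoord, sum_div, mul_div_assoc]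

lemma card_le_abs_gridPoint_le {n d : ℕ} {O : Matrix (Fin d) (Fin d) ℝ}
    (hO : O.transpose * O = 1) (j : Fin d) {t : ℝ} (ht : 0 ≤ t) :
    (#{k | t ≤ |gridPoint n d O k j|} : ℝ) ≤ 2 * 2 ^ (n * d) * exp (-2 * t ^ 2) := by
  have := card_le_abs_sum_le_of_symm (Fin.revPerm (n := 2 ^ n)) gridCoord_rev abs_gridCoord_le
    (by norm_num) (sum_sq_apply_eq_one_of_transpose_mul_self hO j).le ht
  simp only [gridPoint_apply]
  refine this.trans_eq ?_
  simp only [Fintype.card_fin, Nat.cast_pow, Nat.cast_ofNat, pow_mul]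
  ring_nf

theorem approx_radius_of_grid_general (n d : ℕ) (hd : 1 ≤ d)
    (O : Matrix (Fin d) (Fin d) ℝ) (hO : IsOrthogonalMat O)
    (q q' : ℝ≥0∞) (hconj : q⁻¹ + q'⁻¹ = 1)
    (δ : ℝ) (hδ : 0 < δ) :
    (((rotGrid n d O).filter fun x =>
        (d : ℝ) ^ (((1 : ℝ≥0∞) - q⁻¹).toReal) * Real.sqrt (Real.log (2 * d / δ) / 2)
          ≤ lqNorm q' x).card : ℝ)
      ≤ δ * 2 ^ (n * d) := by
  have : ENNReal.HolderConjugate q q' := ENNReal.holderConjugate_iff.2 hconj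
  set t := √(log (2 * d / δ) / 2)
  rw [ENNReal.HolderConjugate.one_sub_inv q q', rotGrid, filter_image]
  calc _ ≤ (#{k | (d : ℝ) ^ q'⁻¹.toReal * t ≤ lqNorm q' (gridPoint n d O k)} : ℝ) := by
        exact_mod_cast card_image_le
    _ ≤ ∑ j, (#{k | t ≤ |gridPoint n d O k j|} : ℝ) := by
        exact_mod_cast card_le_lqNorm_le_sum_card_le_abs hd (ENNReal.HolderConjugate.ne_zero q' q)
          (gridPoint n d O) t
    _ ≤ ∑ _j : Fin d, 2 * 2 ^ (n * d) * exp (-2 * t ^ 2) :=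
        sum_le_sum fun j _ => card_le_abs_gridPoint_le hO.1 j (sqrt_nonneg _)
    _ = 2 * d * exp (-2 * t ^ 2) * 2 ^ (n * d) := by
        simp only [sum_const, card_univ, Fintype.card_fin, nsmul_eq_mul]
        ring
    _ ≤ δ * 2 ^ (n * d) := by
        gcongr
        exact mul_exp_neg_two_mul_sqrt_log_div_sq_le (by positivity) hδ

/-- the number of grid points of `ℓ_{q'}`-norm at least
`d^{1−1/q}·√(ln(2d/δ)/2)` is at most `δ·2^{nd}`. -/
theorem approx_radius_of_grid (n d : ℕ) (hn : 1 ≤ n) (hd : 1 ≤ d)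
    (O : Matrix (Fin d) (Fin d) ℝ) (hO : IsOrthogonalMat O)
    (q q' : ℝ≥0∞) (hq : 1 ≤ q) (hconj : q⁻¹ + q'⁻¹ = 1)
    (δ : ℝ) (hδ : 0 < δ) :
    (((rotGrid n d O).filter fun x =>
        (d : ℝ) ^ (((1 : ℝ≥0∞) - q⁻¹).toReal) * Real.sqrt (Real.log (2 * d / δ) / 2)
          ≤ lqNorm q' x).card : ℝ)
      ≤ δ * 2 ^ (n * d) :=
  approx_radius_of_grid_general n d hd O hO q q' hconj δ hδ
end

section
/- Let n ≥ 1, d ≥ 1, let O be a d×d real orthogonal matrix, let G_O be the rotated hypercubic grid, let q ∈ [1,∞], and let δ > 0. Then for every y ∈ ℝ^d with ‖y‖_q ≤ 1, the number of points x ∈ G_O with |xᵀy| ≥ d^{max{0, 1/2 − 1/q}}·√(ln(2/δ)/2) is at most δ·2^{nd}. (Equivalently, the effective radius r̄_{G_O,δ}(q) is at most d^{max{0,1/2−1/q}}·√(ln(2/δ)/2).) -/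
open scoped ENNReal Classical BigOperators

section Aux

lemma coord_mgf (N : ℕ) (a : ℝ) :
    ∑ m : Fin N, Real.exp (a * ((m : ℝ) + 1 / 2 - N / 2)) ≤
      N * Real.exp ((a * N) ^ 2 / 8) := by
  set v : Fin N → ℝ := fun m => a * ((m : ℝ) + 1 / 2 - N / 2) with hv
  have hrev : ∀ m : Fin N, v (Fin.rev m) = -(v m) := by
    intro m
    have h1 : (m : ℕ) + 1 ≤ N := m.2
    have : ((Fin.rev m : Fin N) : ℝ) = (N : ℝ) - 1 - (m : ℝ) := by
      rw [Fin.val_rev]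
      push_cast [Nat.cast_sub h1]
      ring
    simp only [hv, this]; ring
  have h2 : ∑ m : Fin N, Real.exp (v m) = ∑ m : Fin N, Real.exp (-(v m)) :=
    Fintype.sum_equiv (Fin.revPerm) _ _ (fun m => by rw [Fin.revPerm_apply, hrev])
      |>.symm
  have hpair : ∑ m : Fin N, Real.exp (v m) = ∑ m : Fin N, Real.cosh (v m) := by
    calc ∑ m : Fin N, Real.exp (v m)
        = (∑ m : Fin N, Real.exp (v m) + ∑ m : Fin N, Real.exp (-(v m))) / 2 := by
          rw [← h2]; ring
      _ = ∑ m : Fin N, Real.cosh (v m) := by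
          rw [← Finset.sum_add_distrib, Finset.sum_div]
          exact Finset.sum_congr rfl fun m _ => by rw [Real.cosh_eq]
  rw [hpair]
  calc ∑ m : Fin N, Real.cosh (v m) ≤ ∑ _m : Fin N, Real.exp ((a * N) ^ 2 / 8) := by
        refine Finset.sum_le_sum fun m _ => ?_
        refine (Real.cosh_le_exp_half_sq _).trans (Real.exp_le_exp.2 ?_)
        have hm0 : (0 : ℝ) ≤ (m : ℝ) := Nat.cast_nonneg _
        have hm1 : (m : ℝ) + 1 ≤ N := by exact_mod_cast m.2
        have hu : ((m : ℝ) + 1 / 2 - N / 2) ^ 2 ≤ (N / 2) ^ 2 := by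
          have h := sq_le_sq' (by linarith : -(N / 2 : ℝ) ≤ (m : ℝ) + 1 / 2 - N / 2)
            (by linarith : ((m : ℝ) + 1 / 2 - N / 2) ≤ N / 2)
          exact h
        have : (v m) ^ 2 ≤ (a * N) ^ 2 / 4 := by
          simp only [hv]
          have := mul_le_mul_of_nonneg_left hu (sq_nonneg a)
          nlinarith
        nlinarith
    _ = N * Real.exp ((a * N) ^ 2 / 8) := by simp [Finset.sum_const, nsmul_eq_mul]

lemma grid_mgf (n d : ℕ) (z : Fin d → ℝ) (s : ℝ) :
    ∑ k : Fin d → Fin (2 ^ n), Real.exp (∑ i, s * z i * (((k i : ℝ) + 1 / 2 - 2 ^ n / 2) / 2 ^ n))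
      ≤ 2 ^ (n * d) * Real.exp (s ^ 2 * (∑ i, z i ^ 2) / 8) := by
  have hN : (0 : ℝ) < 2 ^ n := by positivity
  set N : ℕ := 2 ^ n with hNdef
  have hNR : ((N : ℕ) : ℝ) = (2 : ℝ) ^ n := by push_cast [hNdef]; ring
  calc ∑ k : Fin d → Fin N, Real.exp (∑ i, s * z i * (((k i : ℝ) + 1 / 2 - 2 ^ n / 2) / 2 ^ n))
      = ∏ i : Fin d, ∑ m : Fin N, Real.exp ((s * z i / 2 ^ n) * ((m : ℝ) + 1 / 2 - (N : ℝ) / 2)) := by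
        rw [Finset.prod_univ_sum]
        rw [Fintype.piFinset_univ]
        refine Finset.sum_congr rfl fun k _ => ?_
        rw [← Real.exp_sum]
        congr 1
        refine Finset.sum_congr rfl fun i _ => ?_
        rw [hNR]; ring
    _ ≤ ∏ i : Fin d, ((N : ℝ) * Real.exp ((s * z i) ^ 2 / 8)) := by
        refine Finset.prod_le_prod (fun i _ => Finset.sum_nonneg fun m _ => (Real.exp_pos _).le)
          fun i _ => ?_
        have h := coord_mgf N (s * z i / 2 ^ n)
        have : (s * z i / 2 ^ n * (N : ℝ)) ^ 2 = (s * z i) ^ 2 := by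
          rw [hNR]; field_simp
        rwa [this] at h
    _ = 2 ^ (n * d) * Real.exp (s ^ 2 * (∑ i, z i ^ 2) / 8) := by
        rw [Finset.prod_mul_distrib, Finset.prod_const, ← Real.exp_sum, Finset.card_univ,
          Fintype.card_fin]
        rw [hNR, ← pow_mul]
        congr 1
        rw [← Finset.sum_div, Finset.mul_sum]
        congr 2
        exact Finset.sum_congr rfl fun i _ => by ring

lemma l2_le_lq (d : ℕ) (hd : 1 ≤ d) (q : ℝ≥0∞) (hq : 1 ≤ q) (y : Fin d → ℝ)
    (hy : lqNorm q y ≤ 1) :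
    ∑ j, y j ^ 2 ≤ (d : ℝ) ^ (2 * max 0 (1 / 2 - (q⁻¹).toReal)) := by
  have hd0 : (0 : ℝ) < d := by exact_mod_cast hd
  have habs2 : ∀ x : ℝ, x ^ 2 = |x| ^ (2 : ℝ) := by
    intro x
    rw [show (2:ℝ) = ((2:ℕ):ℝ) by norm_num, Real.rpow_natCast, sq_abs]
  by_cases hqt : q = ∞
  · subst hqt
    have hinv : ((∞ : ℝ≥0∞)⁻¹).toReal = 0 := by simp
    rw [hinv]
    have hmax : max (0:ℝ) (1/2 - 0) = 1/2 := by norm_num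
    rw [hmax, show (2:ℝ) * (1/2) = 1 by norm_num, Real.rpow_one]
    rw [lqNorm, if_pos rfl] at hy
    have hsup : ∀ j, |y j| ≤ 1 := fun j =>
      le_trans (le_ciSup (f := fun j => |y j|) (Set.Finite.bddAbove (Set.finite_range _)) j) hy
    calc ∑ j, y j ^ 2 ≤ ∑ _j : Fin d, (1:ℝ) := by
          refine Finset.sum_le_sum fun j _ => ?_
          rw [← sq_abs]
          nlinarith [abs_nonneg (y j), hsup j]
      _ = d := by simp
  · set p := q.toReal with hpdef
    have hq0 : q ≠ 0 := by intro h; rw [h] at hq; simp at hq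
    have hp1 : 1 ≤ p := by
      have := ENNReal.toReal_mono hqt hq
      simpa using this
    have hp0 : 0 < p := lt_of_lt_of_le one_pos hp1
    have hinv : (q⁻¹).toReal = p⁻¹ := by rw [ENNReal.toReal_inv]
    rw [lqNorm, if_neg hqt] at hy
    set S := ∑ j, |y j| ^ p with hSdef
    have hSnn : 0 ≤ S := Finset.sum_nonneg fun j _ => Real.rpow_nonneg (abs_nonneg _) _
    have hS1 : S ≤ 1 := by
      have h1 : S = (S ^ (1/p)) ^ p := by
        rw [← Real.rpow_mul hSnn]
        rw [one_div, inv_mul_cancel₀ (ne_of_gt hp0), Real.rpow_one]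
      rw [h1]
      calc (S ^ (1/p)) ^ p ≤ (1:ℝ) ^ p :=
            Real.rpow_le_rpow (Real.rpow_nonneg hSnn _) hy (le_of_lt hp0)
        _ = 1 := Real.one_rpow _
    have hterm : ∀ j, |y j| ^ p ≤ S := fun j =>
      Finset.single_le_sum (fun i _ => Real.rpow_nonneg (abs_nonneg _) _) (Finset.mem_univ j)
    have habs1 : ∀ j, |y j| ≤ 1 := by
      intro j
      by_contra h
      push_neg at h
      have : (1:ℝ) < |y j| ^ p := by
        calc (1:ℝ) = 1 ^ p := (Real.one_rpow _).symm
          _ < |y j| ^ p := Real.rpow_lt_rpow (by norm_num) h hp0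
      linarith [hterm j, hS1]
    rw [hinv]
    rcases le_or_gt p 2 with hp2 | hp2
    · have hmax : max (0:ℝ) (1/2 - p⁻¹) = 0 := by
        have : p⁻¹ ≥ 1/2 := by
          rw [ge_iff_le, le_inv_comm₀] <;> try positivity
          · linarith
        exact max_eq_left (by linarith)
      rw [hmax, mul_zero, Real.rpow_zero]
      calc ∑ j, y j ^ 2 ≤ ∑ j, |y j| ^ p := by
            refine Finset.sum_le_sum fun j _ => ?_
            rcases eq_or_lt_of_le (abs_nonneg (y j)) with h0 | h0
            · rw [habs2, ← h0, Real.zero_rpow (by norm_num), Real.zero_rpow (ne_of_gt hp0)]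
            · rw [habs2]
              exact Real.rpow_le_rpow_of_exponent_ge h0 (habs1 j) hp2
        _ ≤ 1 := hS1
    · have hmax : max (0:ℝ) (1/2 - p⁻¹) = 1/2 - p⁻¹ := by
        have : p⁻¹ ≤ 1/2 := by
          rw [inv_le_comm₀] <;> try positivity
          linarith
        exact max_eq_right (by linarith)
      rw [hmax]
      set T := ∑ j, y j ^ 2 with hTdef
      have hTnn : 0 ≤ T := Finset.sum_nonneg fun j _ => sq_nonneg _
      have hp2' : 1 ≤ p / 2 := by linarith
      have hkey : T ^ (p/2) ≤ (d:ℝ) ^ (p/2 - 1) := by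
        have h := Real.rpow_sum_le_const_mul_sum_rpow Finset.univ (fun j => y j ^ 2) hp2'
        have habsq : ∀ x : ℝ, |x ^ 2| = x ^ 2 := fun x => abs_of_nonneg (sq_nonneg x)
        simp only [habsq] at h
        have heq : ∀ j : Fin d, (y j ^ 2) ^ (p/2) = |y j| ^ p := by
          intro j
          rw [habs2, ← Real.rpow_mul (abs_nonneg _)]
          congr 1
          ring
        simp only [heq] at h
        calc T ^ (p/2) ≤ (Finset.univ.card : ℝ) ^ (p/2 - 1) * S := h
          _ ≤ (d:ℝ) ^ (p/2 - 1) := by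
              rw [Finset.card_univ, Fintype.card_fin]
              exact mul_le_of_le_one_right (Real.rpow_nonneg (le_of_lt hd0) _) hS1
      have hT : T = (T ^ (p/2)) ^ (2/p) := by
        rw [← Real.rpow_mul hTnn]
        rw [show (p/2) * (2/p) = 1 by field_simp, Real.rpow_one]
      rw [hT]
      calc (T ^ (p/2)) ^ (2/p) ≤ ((d:ℝ) ^ (p/2 - 1)) ^ (2/p) :=
            Real.rpow_le_rpow (Real.rpow_nonneg hTnn _) hkey (by positivity)
        _ = (d:ℝ) ^ (2 * (1/2 - p⁻¹)) := by
            rw [← Real.rpow_mul (le_of_lt hd0)]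
            congr 1
            field_simp

end Aux

/-- for any `y` with `‖y‖_q ≤ 1`, the number of grid points `x` with
`|xᵀy| ≥ d^{max{0,1/2−1/q}}·√(ln(2/δ)/2)` is at most `δ·2^{nd}`. -/
theorem effective_radius_of_grid (n d : ℕ) (hn : 1 ≤ n) (hd : 1 ≤ d)
    (O : Matrix (Fin d) (Fin d) ℝ) (hO : IsOrthogonalMat O)
    (q : ℝ≥0∞) (hq : 1 ≤ q) (δ : ℝ) (hδ : 0 < δ)
    (y : Fin d → ℝ) (hy : lqNorm q y ≤ 1) :
    (((rotGrid n d O).filter fun x =>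
        (d : ℝ) ^ (max 0 (1 / 2 - (q⁻¹).toReal)) * Real.sqrt (Real.log (2 / δ) / 2)
          ≤ |∑ j, x j * y j|).card : ℝ)
      ≤ δ * 2 ^ (n * d) := by
  classical
  have hd0 : (0 : ℝ) < d := by exact_mod_cast hd
  set c : ℝ := max 0 (1 / 2 - (q⁻¹).toReal) with hc
  set D : ℝ := (d : ℝ) ^ c with hD
  set t : ℝ := D * Real.sqrt (Real.log (2 / δ) / 2) with ht
  set P : (Fin d → ℝ) → Prop := fun x => t ≤ |∑ j, x j * y j| with hP
  -- a priori cardinality bound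
  have hcard_all : (((rotGrid n d O).filter P).card : ℝ) ≤ 2 ^ (n * d) := by
    have h1 : ((rotGrid n d O).filter P).card ≤ 2 ^ (n * d) := by
      refine le_trans (Finset.card_filter_le _ _) ?_
      refine le_trans Finset.card_image_le ?_
      rw [Finset.card_univ, Fintype.card_fun, Fintype.card_fin, Fintype.card_fin, ← pow_mul]
    exact_mod_cast h1
  rcases le_or_gt 1 δ with hδ1 | hδ1
  · calc (((rotGrid n d O).filter P).card : ℝ) ≤ 2 ^ (n * d) := hcard_all
      _ = 1 * 2 ^ (n * d) := by ring
      _ ≤ δ * 2 ^ (n * d) := by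
          have : (0:ℝ) < 2 ^ (n * d) := by positivity
          nlinarith
  · -- δ < 1
    set L : ℝ := Real.log (2 / δ) with hLdef
    have hL : 0 < L := Real.log_pos (by rw [lt_div_iff₀ hδ]; linarith)
    have hDpos : 0 < D := Real.rpow_pos_of_pos hd0 _
    have ht0 : 0 < t := mul_pos hDpos (Real.sqrt_pos.2 (by positivity))
    set z : Fin d → ℝ := fun i => ∑ j, O i j * y j with hz
    set Z : ℝ := ∑ i, z i ^ 2 with hZ
    have hOO : ∀ j j', ∑ i, O i j * O i j' = if j = j' then (1:ℝ) else 0 := by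
      intro j j'
      have h := congrFun (congrFun hO.1 j) j'
      simpa [Matrix.mul_apply, Matrix.transpose_apply, Matrix.one_apply] using h
    have hZy : Z = ∑ j, y j ^ 2 := by
      calc Z = ∑ i, ∑ j, ∑ j', (O i j * O i j') * (y j * y j') := by
            refine Finset.sum_congr rfl fun i _ => ?_
            rw [sq, hz, Finset.sum_mul_sum]
            exact Finset.sum_congr rfl fun j _ => Finset.sum_congr rfl fun j' _ => by ring
        _ = ∑ j, ∑ j', (∑ i, O i j * O i j') * (y j * y j') := by
            rw [Finset.sum_comm]
            refine Finset.sum_congr rfl fun j _ => ?_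
            rw [Finset.sum_comm]
            refine Finset.sum_congr rfl fun j' _ => ?_
            rw [Finset.sum_mul]
        _ = ∑ j, y j ^ 2 := by
            refine Finset.sum_congr rfl fun j _ => ?_
            simp only [hOO, ite_mul, one_mul, zero_mul]
            rw [Finset.sum_ite_eq, if_pos (Finset.mem_univ j), sq]
    have hZD : Z ≤ D ^ 2 := by
      have h1 := l2_le_lq d hd q hq y hy
      have h2 : D ^ 2 = (d : ℝ) ^ (2 * c) := by
        rw [hD, sq, ← Real.rpow_add hd0]
        congr 1; ring
      rw [hZy, h2]
      exact h1
    have hZnn : 0 ≤ Z := Finset.sum_nonneg fun i _ => sq_nonneg _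
    -- inner product identity
    have hA : ∀ k : Fin d → Fin (2 ^ n),
        ∑ j, gridPoint n d O k j * y j = ∑ i, z i * (((k i : ℝ) + 1 / 2 - 2 ^ n / 2) / 2 ^ n) := by
      intro k
      calc ∑ j, gridPoint n d O k j * y j
          = ∑ j, ∑ i, O i j * ((k i : ℝ) + 1 / 2 - 2 ^ n / 2) * y j / 2 ^ n := by
            refine Finset.sum_congr rfl fun j _ => ?_
            rw [gridPoint, div_mul_eq_mul_div, Finset.sum_mul, Finset.sum_div]
        _ = ∑ i, ∑ j, O i j * ((k i : ℝ) + 1 / 2 - 2 ^ n / 2) * y j / 2 ^ n := Finset.sum_comm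
        _ = ∑ i, z i * (((k i : ℝ) + 1 / 2 - 2 ^ n / 2) / 2 ^ n) := by
            refine Finset.sum_congr rfl fun i _ => ?_
            rw [hz, Finset.sum_mul]
            exact Finset.sum_congr rfl fun j _ => by ring
    rcases eq_or_lt_of_le hZnn with hZ0 | hZ0
    · -- Z = 0 : y = 0 and no point is in the filter
      have hy0 : ∀ j, y j = 0 := by
        intro j
        have h0 : ∑ j, y j ^ 2 = 0 := by rw [← hZy, ← hZ0]
        have := (Finset.sum_eq_zero_iff_of_nonneg (fun j _ => sq_nonneg (y j))).1 h0 j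
          (Finset.mem_univ j)
        exact pow_eq_zero_iff (by norm_num) |>.1 this
      have : (rotGrid n d O).filter P = ∅ := by
        refine Finset.filter_eq_empty_iff.2 fun x _ => ?_
        simp only [hP]
        have : ∑ j, x j * y j = 0 := Finset.sum_eq_zero fun j _ => by rw [hy0 j, mul_zero]
        rw [this, abs_zero]
        push_neg
        exact ht0
      rw [this]
      simp only [Finset.card_empty, Nat.cast_zero]
      positivity
    · -- Z > 0 : Hoeffding bound
      set s : ℝ := 4 * t / Z with hs
      have hs0 : 0 < s := by positivity
      set A : (Fin d → Fin (2 ^ n)) → ℝ :=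
        fun k => ∑ i, z i * (((k i : ℝ) + 1 / 2 - 2 ^ n / 2) / 2 ^ n) with hAdef
      -- reduce to index count
      have hsub : (((rotGrid n d O).filter P).card : ℝ)
          ≤ ((Finset.univ.filter fun k => P (gridPoint n d O k)).card : ℝ) := by
        have h1 : ((rotGrid n d O).filter P) =
            ((Finset.univ.filter fun k => P (gridPoint n d O k)).image (gridPoint n d O)) := by
          rw [rotGrid, Finset.filter_image]
        rw [h1]
        exact_mod_cast Finset.card_image_le
      have hexpabs : ∀ x : ℝ, Real.exp |x| ≤ Real.exp x + Real.exp (-x) := by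
        intro x
        rcases abs_cases x with ⟨h, _⟩ | ⟨h, _⟩ <;> rw [h]
        · linarith [Real.exp_pos (-x)]
        · linarith [Real.exp_pos x]
      have hmarkov : ((Finset.univ.filter fun k => P (gridPoint n d O k)).card : ℝ)
          ≤ Real.exp (-(s * t)) *
            ((∑ k : Fin d → Fin (2 ^ n), Real.exp (s * A k)) +
             (∑ k : Fin d → Fin (2 ^ n), Real.exp (-s * A k))) := by
        rw [Finset.card_eq_sum_ones, Nat.cast_sum]
        push_cast
        calc ∑ k ∈ Finset.univ.filter fun k => P (gridPoint n d O k), (1:ℝ)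
            ≤ ∑ k ∈ Finset.univ.filter fun k => P (gridPoint n d O k),
                Real.exp (-(s * t)) * (Real.exp (s * A k) + Real.exp (-s * A k)) := by
              refine Finset.sum_le_sum fun k hk => ?_
              have hkP : t ≤ |A k| := by
                have := (Finset.mem_filter.1 hk).2
                simpa only [hP, hA k] using this
              have h1 : Real.exp (s * t) ≤ Real.exp (s * A k) + Real.exp (-s * A k) := by
                have h2 : s * t ≤ |s * A k| := by
                  rw [abs_mul, abs_of_pos hs0]
                  exact mul_le_mul_of_nonneg_left hkP (le_of_lt hs0)
                calc Real.exp (s * t) ≤ Real.exp |s * A k| := Real.exp_le_exp.2 h2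
                  _ ≤ Real.exp (s * A k) + Real.exp (-(s * A k)) := hexpabs _
                  _ = Real.exp (s * A k) + Real.exp (-s * A k) := by rw [neg_mul]
              have h3 : Real.exp (-(s * t)) * Real.exp (s * t) = 1 := by
                rw [← Real.exp_add]; simp
              calc (1:ℝ) = Real.exp (-(s * t)) * Real.exp (s * t) := h3.symm
                _ ≤ Real.exp (-(s * t)) * (Real.exp (s * A k) + Real.exp (-s * A k)) := by
                    exact mul_le_mul_of_nonneg_left h1 (Real.exp_pos _).le
          _ ≤ ∑ k : Fin d → Fin (2 ^ n),
                Real.exp (-(s * t)) * (Real.exp (s * A k) + Real.exp (-s * A k)) := by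
              refine Finset.sum_le_sum_of_subset_of_nonneg (Finset.filter_subset _ _)
                fun k _ _ => ?_
              positivity
          _ = Real.exp (-(s * t)) *
              ((∑ k : Fin d → Fin (2 ^ n), Real.exp (s * A k)) +
               (∑ k : Fin d → Fin (2 ^ n), Real.exp (-s * A k))) := by
              rw [← Finset.mul_sum, ← Finset.sum_add_distrib]
      -- MGF bounds
      have hmgf1 : ∑ k : Fin d → Fin (2 ^ n), Real.exp (s * A k)
          ≤ 2 ^ (n * d) * Real.exp (s ^ 2 * Z / 8) := by
        have h := grid_mgf n d z s
        refine le_trans (le_of_eq ?_) h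
        refine Finset.sum_congr rfl fun k _ => ?_
        congr 1
        rw [hAdef, Finset.mul_sum]
        exact Finset.sum_congr rfl fun i _ => by ring
      have hmgf2 : ∑ k : Fin d → Fin (2 ^ n), Real.exp (-s * A k)
          ≤ 2 ^ (n * d) * Real.exp (s ^ 2 * Z / 8) := by
        have h := grid_mgf n d z (-s)
        have hsq : (-s) ^ 2 = s ^ 2 := by ring
        rw [hsq] at h
        refine le_trans (le_of_eq ?_) h
        refine Finset.sum_congr rfl fun k _ => ?_
        congr 1
        rw [hAdef, Finset.mul_sum]
        exact Finset.sum_congr rfl fun i _ => by ring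
      -- exponent computation
      have hexp : s ^ 2 * Z / 8 + -(s * t) ≤ -L := by
        have ht2 : t ^ 2 = D ^ 2 * (L / 2) := by
          rw [ht, mul_pow, Real.sq_sqrt (by positivity : (0:ℝ) ≤ L / 2)]
        have hcomp : s ^ 2 * Z / 8 + -(s * t) = -(2 * t ^ 2 / Z) := by
          rw [hs]; field_simp; ring
        rw [hcomp, neg_le_neg_iff]
        rw [le_div_iff₀ hZ0]
        calc L * Z ≤ L * D ^ 2 := mul_le_mul_of_nonneg_left hZD (le_of_lt hL)
          _ = 2 * t ^ 2 := by rw [ht2]; ring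
      have hfinal : Real.exp (-L) = δ / 2 := by
        rw [hLdef, ← Real.log_inv, Real.exp_log (by positivity)]
        rw [inv_div]
      calc (((rotGrid n d O).filter P).card : ℝ)
          ≤ ((Finset.univ.filter fun k => P (gridPoint n d O k)).card : ℝ) := hsub
        _ ≤ Real.exp (-(s * t)) *
            ((∑ k : Fin d → Fin (2 ^ n), Real.exp (s * A k)) +
             (∑ k : Fin d → Fin (2 ^ n), Real.exp (-s * A k))) := hmarkov
        _ ≤ Real.exp (-(s * t)) *
            (2 ^ (n * d) * Real.exp (s ^ 2 * Z / 8) + 2 ^ (n * d) * Real.exp (s ^ 2 * Z / 8)) := by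
            exact mul_le_mul_of_nonneg_left (add_le_add hmgf1 hmgf2) (Real.exp_pos _).le
        _ = 2 ^ (n * d) * (2 * Real.exp (s ^ 2 * Z / 8 + -(s * t))) := by
            rw [Real.exp_add]; ring
        _ ≤ 2 ^ (n * d) * (2 * Real.exp (-L)) := by
            have := Real.exp_le_exp.2 hexp
            have h2 : (0:ℝ) ≤ 2 ^ (n * d) := by positivity
            nlinarith
        _ = δ * 2 ^ (n * d) := by rw [hfinal]; ring
end

section
/- Let d ≥ 1, ε > 0, let O and O' be d×d real orthogonal matrices, let y ∈ ℝ^d, and for x ∈ {0,1}^d define V(x) = y + (8ε/d)·O'x ∈ ℝ^d. Suppose a ∈ ℝ^d and b, b* ∈ {0,1}^d satisfy ‖O(a − V(b))‖₁ ≤ ε and ‖O(a − V(b*))‖₁ ≤ ‖O(a − V(b))‖₁. Then ‖OO'(b − b*)‖₁ ≤ d/4. -/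
open scoped BigOperators

/-- The `ℓ₁`-norm of a vector in `ℝ^d`. -/
noncomputable def l1Norm {d : ℕ} (v : Fin d → ℝ) : ℝ := ∑ j, |v j|

lemma l1Norm_sub_le {d : ℕ} (u v : Fin d → ℝ) :
    l1Norm (u - v) ≤ l1Norm u + l1Norm v := by
  simp only [l1Norm, ← Finset.sum_add_distrib]
  exact Finset.sum_le_sum fun j _ => abs_sub (u j) (v j)

lemma l1Norm_smul {d : ℕ} (c : ℝ) (v : Fin d → ℝ) :
    l1Norm (c • v) = |c| * l1Norm v := by
  simp [l1Norm, abs_mul, Finset.mul_sum]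

/-- the deterministic core of the reduction from producing a
high-overlap bit string to multivariate Monte Carlo estimation. -/
theorem high_overlap_reduction (d : ℕ) (hd : 1 ≤ d) (ε : ℝ) (hε : 0 < ε)
    (O O' : Matrix (Fin d) (Fin d) ℝ)
    (hO : IsOrthogonalMat O) (hO' : IsOrthogonalMat O')
    (y : Fin d → ℝ)
    (V : (Fin d → ℝ) → (Fin d → ℝ))
    (hV : ∀ x, V x = y + (8 * ε / d) • O'.mulVec x)
    (a : Fin d → ℝ) (b bstar : Fin d → ℝ)
    (hb : ∀ j, b j = 0 ∨ b j = 1) (hbstar : ∀ j, bstar j = 0 ∨ bstar j = 1)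
    (h1 : l1Norm (O.mulVec (a - V b)) ≤ ε)
    (h2 : l1Norm (O.mulVec (a - V bstar)) ≤ l1Norm (O.mulVec (a - V b))) :
    l1Norm ((O * O').mulVec (b - bstar)) ≤ d / 4 := by
  have hdpos : (0:ℝ) < d := by exact_mod_cast hd
  have hc : (0:ℝ) < 8 * ε / d := by positivity
  have key : (O * O').mulVec (b - bstar)
      = (d / (8 * ε)) • (O.mulVec (a - V bstar) - O.mulVec (a - V b)) := by
    rw [← Matrix.mulVec_sub, hV, hV]
    have : a - (y + (8 * ε / d) • O'.mulVec bstar) - (a - (y + (8 * ε / d) • O'.mulVec b))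
        = (8 * ε / d) • O'.mulVec (b - bstar) := by
      rw [Matrix.mulVec_sub]; module
    rw [this, Matrix.mulVec_smul, smul_smul, Matrix.mulVec_mulVec]
    have h1' : (d:ℝ) / (8 * ε) * (8 * ε / d) = 1 := by
      field_simp
    rw [h1', one_smul]
  rw [key, l1Norm_smul]
  have htri := l1Norm_sub_le (O.mulVec (a - V bstar)) (O.mulVec (a - V b))
  have hb2 : l1Norm (O.mulVec (a - V bstar) - O.mulVec (a - V b)) ≤ 2 * ε := by
    nlinarith
  have habs : |(d:ℝ) / (8 * ε)| = d / (8 * ε) := abs_of_pos (by positivity)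
  rw [habs]
  have hnn : 0 ≤ (d:ℝ) / (8 * ε) := by positivity
  calc (d:ℝ) / (8 * ε) * l1Norm (O.mulVec (a - V bstar) - O.mulVec (a - V b))
      ≤ (d:ℝ) / (8 * ε) * (2 * ε) := by exact mul_le_mul_of_nonneg_left hb2 hnn
    _ = d / 4 := by field_simp; ring
end

section
/- Let d ≥ 250 be a natural number and let Q be a natural number such that Σ_{k=0}^{min(Q,d)} binomial(d,k) ≥ (2/3)·exp((d/2)·(1/(2√2) − 1/4)²). Then Q ≥ d/3000. -/
open scoped BigOperators

lemma choose_mono_of_le_half' {d Q : ℕ} (hQ : 2 * Q ≤ d) :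
    ∀ k, k ≤ Q → d.choose k ≤ d.choose Q := by
  induction Q with
  | zero => intro k hk; simp [Nat.le_zero.mp hk]
  | succ n ih =>
    intro k hk
    rcases Nat.lt_or_ge k (n + 1) with hlt | hge
    · exact le_trans (ih (by omega) k (by omega))
        (Nat.choose_le_succ_of_lt_half_left (by omega))
    · have hk' : k = n + 1 := le_antisymm hk hge
      simp [hk']

/-- the arithmetic core of the `Ω(d)` query lower bound for producing a
high-overlap bit string from a phase oracle. -/
theorem counting_lower_bound (d Q : ℕ) (hd : 250 ≤ d)
    (h : (2 / 3 : ℝ) * Real.exp (((d : ℝ) / 2) * (1 / (2 * Real.sqrt 2) - 1 / 4) ^ 2)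
      ≤ ∑ k ∈ Finset.range (min Q d + 1), (d.choose k : ℝ)) :
    (d : ℝ) / 3000 ≤ (Q : ℝ) := by
  by_contra hlt
  push_neg at hlt
  have hdR : (250 : ℝ) ≤ (d : ℝ) := by exact_mod_cast hd
  have hQd : 3000 * Q < d := by
    have : (3000 : ℝ) * Q < d := by linarith
    exact_mod_cast this
  have hmin : min Q d = Q := min_eq_left (by omega)
  rw [hmin] at h
  -- bound the exponent from below
  have hs0 : (0 : ℝ) ≤ Real.sqrt 2 := Real.sqrt_nonneg 2
  have hs2 : Real.sqrt 2 ^ 2 = 2 := Real.sq_sqrt (by norm_num)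
  have hsU : Real.sqrt 2 ≤ 1.41422 := by nlinarith
  have hsL : (1 : ℝ) ≤ Real.sqrt 2 := by nlinarith
  have hc : (0.35355 : ℝ) ≤ 1 / (2 * Real.sqrt 2) := by
    rw [le_div_iff₀ (by positivity)]
    nlinarith
  set c : ℝ := 1 / (2 * Real.sqrt 2) - 1 / 4 with hcdef
  have hcL : (0.10355 : ℝ) ≤ c := by simp only [hcdef]; linarith
  set E : ℝ := ((d : ℝ) / 2) * c ^ 2 with hEdef
  have hE : 0.00536 * (d : ℝ) ≤ E := by
    have : (0.10355 : ℝ) ^ 2 ≤ c ^ 2 := by nlinarith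
    simp only [hEdef]; nlinarith
  rcases Nat.eq_zero_or_pos Q with hQ0 | hQ1
  · -- Q = 0 : the sum is 1
    subst hQ0
    simp only [Nat.zero_add, Finset.range_one, Finset.sum_singleton, Nat.choose_zero_right,
      Nat.cast_one] at h
    have h1 : E + 1 ≤ Real.exp E := Real.add_one_le_exp E
    nlinarith
  · -- Q ≥ 1, hence d ≥ 3001
    have hQR : (1 : ℝ) ≤ (Q : ℝ) := by exact_mod_cast hQ1
    have hdQ : (3000 : ℝ) * Q < d := by exact_mod_cast hQd
    have hd3 : (3001 : ℝ) ≤ (d : ℝ) := by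
      have : 3001 ≤ d := by omega
      exact_mod_cast this
    have hQpos : (0 : ℝ) < (Q : ℝ) := by linarith
    have hdpos : (0 : ℝ) < (d : ℝ) := by linarith
    -- Step A: sum ≤ (Q+1) * choose d Q
    have hA : ∑ k ∈ Finset.range (Q + 1), (d.choose k : ℝ)
        ≤ ((Q : ℝ) + 1) * (d.choose Q : ℝ) := by
      have : ∑ k ∈ Finset.range (Q + 1), d.choose k ≤ (Q + 1) * d.choose Q := by
        calc ∑ k ∈ Finset.range (Q + 1), d.choose k
            ≤ (Finset.range (Q + 1)).card • d.choose Q :=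
              Finset.sum_le_card_nsmul _ _ _ (fun k hk =>
                choose_mono_of_le_half' (by omega) k
                  (Nat.lt_succ_iff.mp (Finset.mem_range.mp hk)))
          _ = (Q + 1) * d.choose Q := by simp [smul_eq_mul]
      calc ∑ k ∈ Finset.range (Q + 1), (d.choose k : ℝ)
          = ((∑ k ∈ Finset.range (Q + 1), d.choose k : ℕ) : ℝ) := by push_cast; ring
        _ ≤ (((Q + 1) * d.choose Q : ℕ) : ℝ) := by exact_mod_cast this
        _ = ((Q : ℝ) + 1) * (d.choose Q : ℝ) := by push_cast; ring
    -- Step B: choose d Q ≤ d^Q / Q!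
    have hBnat : d.choose Q * Q.factorial ≤ d ^ Q := by
      calc d.choose Q * Q.factorial = Q.factorial * d.choose Q := mul_comm _ _
        _ = d.descFactorial Q := (Nat.descFactorial_eq_factorial_mul_choose d Q).symm
        _ ≤ d ^ Q := Nat.descFactorial_le_pow d Q
    have hfacpos : (0 : ℝ) < (Q.factorial : ℝ) := by exact_mod_cast Q.factorial_pos
    have hB : (d.choose Q : ℝ) ≤ (d : ℝ) ^ Q / (Q.factorial : ℝ) := by
      rw [le_div_iff₀ hfacpos]
      exact_mod_cast hBnat
    -- Step C: Q^Q / Q! ≤ exp Q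
    have hC : ((Q : ℝ)) ^ Q / (Q.factorial : ℝ) ≤ Real.exp Q :=
      Real.pow_div_factorial_le_exp (x := (Q : ℝ)) hQpos.le Q
    -- hence choose d Q ≤ (d/Q)^Q * exp Q
    have hD : (d.choose Q : ℝ) ≤ ((d : ℝ) / Q) ^ Q * Real.exp Q := by
      have hQQpos : (0 : ℝ) < (Q : ℝ) ^ Q := by positivity
      have h1 : (d : ℝ) ^ Q / (Q.factorial : ℝ)
          = ((d : ℝ) / Q) ^ Q * ((Q : ℝ) ^ Q / (Q.factorial : ℝ)) := by
        rw [div_pow]; field_simp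
      rw [h1] at hB
      exact hB.trans (by
        have hdQpow : (0 : ℝ) ≤ ((d : ℝ) / Q) ^ Q := by positivity
        exact mul_le_mul_of_nonneg_left hC hdQpow)
    -- Step D: (d/Q)^Q ≤ exp(9 * d / 3000 - ... ) via log bound
    have hlog3000 : Real.log 3000 ≤ 9 := by
      rw [Real.log_le_iff_le_exp (by norm_num)]
      calc (3000 : ℝ) ≤ 2.7182818283 ^ (9 : ℕ) := by norm_num
        _ ≤ Real.exp 1 ^ (9 : ℕ) :=
            pow_le_pow_left₀ (by norm_num) Real.exp_one_gt_d9.le 9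
        _ = Real.exp 9 := by
            rw [← Real.exp_nat_mul]; norm_num
    have hratpos : (0 : ℝ) < (d : ℝ) / Q := by positivity
    have hDlog : Real.log ((d : ℝ) / Q) ≤ 9 + (d : ℝ) / (3000 * Q) - 1 := by
      have hsplit : (d : ℝ) / Q = 3000 * ((d : ℝ) / (3000 * Q)) := by
        field_simp
      have hxpos : (0 : ℝ) < (d : ℝ) / (3000 * Q) := by positivity
      calc Real.log ((d : ℝ) / Q)
          = Real.log 3000 + Real.log ((d : ℝ) / (3000 * Q)) := by
            rw [hsplit, Real.log_mul (by norm_num) (ne_of_gt hxpos)]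
        _ ≤ 9 + ((d : ℝ) / (3000 * Q) - 1) :=
            add_le_add hlog3000 (Real.log_le_sub_one_of_pos hxpos)
        _ = 9 + (d : ℝ) / (3000 * Q) - 1 := by ring
    have hDexp : ((d : ℝ) / Q) ^ Q ≤ Real.exp ((Q : ℝ) * 8 + (d : ℝ) / 3000) := by
      have hpow : ((d : ℝ) / Q) ^ Q = Real.exp ((Q : ℝ) * Real.log ((d : ℝ) / Q)) := by
        rw [Real.exp_nat_mul, Real.exp_log hratpos]
      rw [hpow]
      apply Real.exp_le_exp.mpr
      have hmul : (Q : ℝ) * Real.log ((d : ℝ) / Q)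
          ≤ (Q : ℝ) * (9 + (d : ℝ) / (3000 * Q) - 1) :=
        mul_le_mul_of_nonneg_left hDlog hQpos.le
      have hsimp : (Q : ℝ) * (9 + (d : ℝ) / (3000 * Q) - 1)
          = (Q : ℝ) * 8 + (d : ℝ) / 3000 := by
        field_simp; ring
      linarith [hmul, hsimp ▸ hmul]
    -- Step E: Q + 1 ≤ exp Q
    have hEq : (Q : ℝ) + 1 ≤ Real.exp Q := Real.add_one_le_exp (Q : ℝ)
    -- Combine
    have hQd3000 : (Q : ℝ) ≤ (d : ℝ) / 3000 := by linarith
    have hcomb : ∑ k ∈ Finset.range (Q + 1), (d.choose k : ℝ)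
        ≤ Real.exp ((Q : ℝ) + ((Q : ℝ) * 8 + (d : ℝ) / 3000) + (Q : ℝ)) := by
      rw [Real.exp_add, Real.exp_add]
      calc ∑ k ∈ Finset.range (Q + 1), (d.choose k : ℝ)
          ≤ ((Q : ℝ) + 1) * (d.choose Q : ℝ) := hA
        _ ≤ ((Q : ℝ) + 1) * (((d : ℝ) / Q) ^ Q * Real.exp Q) := by
            apply mul_le_mul_of_nonneg_left hD (by positivity)
        _ ≤ Real.exp Q * (Real.exp ((Q : ℝ) * 8 + (d : ℝ) / 3000) * Real.exp Q) := by
            apply mul_le_mul hEq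
            · exact mul_le_mul_of_nonneg_right hDexp (Real.exp_pos _).le
            · positivity
            · positivity
        _ = Real.exp Q * Real.exp ((Q : ℝ) * 8 + (d : ℝ) / 3000) * Real.exp Q := by ring
    have hbig : (Q : ℝ) + ((Q : ℝ) * 8 + (d : ℝ) / 3000) + (Q : ℝ)
        ≤ 11 * (d : ℝ) / 3000 := by linarith
    have hfinal : (2 / 3 : ℝ) * Real.exp E ≤ Real.exp (11 * (d : ℝ) / 3000) :=
      le_trans (le_trans h hcomb) (Real.exp_le_exp.mpr hbig)
    -- derive a contradiction
    have hEbig : 11 * (d : ℝ) / 3000 + 0.001 * (d : ℝ) ≤ E := by linarith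
    have hge : Real.exp (11 * (d : ℝ) / 3000) * Real.exp (0.001 * (d : ℝ)) ≤ Real.exp E := by
      rw [← Real.exp_add]
      exact Real.exp_le_exp.mpr hEbig
    have hpa := Real.exp_pos (11 * (d : ℝ) / 3000)
    have h4 : Real.exp (11 * (d : ℝ) / 3000) * ((2 / 3 : ℝ) * Real.exp (0.001 * (d : ℝ)))
        ≤ Real.exp (11 * (d : ℝ) / 3000) * 1 := by
      calc Real.exp (11 * (d : ℝ) / 3000) * ((2 / 3 : ℝ) * Real.exp (0.001 * (d : ℝ)))
          = (2 / 3 : ℝ) * (Real.exp (11 * (d : ℝ) / 3000) * Real.exp (0.001 * (d : ℝ))) := by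
            ring
        _ ≤ (2 / 3 : ℝ) * Real.exp E := mul_le_mul_of_nonneg_left hge (by norm_num)
        _ ≤ Real.exp (11 * (d : ℝ) / 3000) := hfinal
        _ = Real.exp (11 * (d : ℝ) / 3000) * 1 := (mul_one _).symm
    have h2 : (2 / 3 : ℝ) * Real.exp (0.001 * (d : ℝ)) ≤ 1 := le_of_mul_le_mul_left h4 hpa
    have h3 : 0.001 * (d : ℝ) + 1 ≤ Real.exp (0.001 * (d : ℝ)) := Real.add_one_le_exp _
    linarith
end

section
/- Let d ≥ 1 and let O be a d×d real orthogonal matrix. Then Σ_{x ∈ {0,1}^d} ‖Ox‖₁ ≥ 2^d · d/(2√2). Equivalently, if x is drawn uniformly from {0,1}^d, then E[‖Ox‖₁] ≥ d/(2√2). -/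
open scoped BigOperators

/-- Identification of a bit string in `{0,1}^d` with a real vector. -/
def bitVec {d : ℕ} (x : Fin d → Bool) : Fin d → ℝ := fun j => if x j then 1 else 0

/- Auxiliary development: Walsh–Fourier analysis on the discrete cube, the sharp
`L¹` Khintchine inequality (Szarek's constant `1/√2`), and symmetrization. -/
namespace SzAux

open Finset

variable {n : ℕ}

def sgn (b : Bool) : ℝ := if b then 1 else -1

lemma sgn_not (b : Bool) : sgn (!b) = - sgn b := by cases b <;> simp [sgn]

lemma sgn_mul_self (b : Bool) : sgn b * sgn b = 1 := by cases b <;> simp [sgn]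

lemma abs_sgn (b : Bool) : |sgn b| = 1 := by cases b <;> simp [sgn]

noncomputable def chi (A : Finset (Fin n)) (x : Fin n → Bool) : ℝ := ∏ i ∈ A, sgn (x i)

def flip1 (i : Fin n) (x : Fin n → Bool) : Fin n → Bool := fun j => if j = i then !x j else x j

lemma flip1_invol (i : Fin n) : Function.Involutive (flip1 i) := by
  intro x; funext j; simp only [flip1]; by_cases h : j = i <;> simp [h]

def flipAll (x : Fin n → Bool) : Fin n → Bool := fun j => !x j

lemma flipAll_invol : Function.Involutive (flipAll (n := n)) := by
  intro x; funext j; simp [flipAll]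

lemma sum_comp_invol {e : (Fin n → Bool) → (Fin n → Bool)} (he : Function.Involutive e)
    (F : (Fin n → Bool) → ℝ) : ∑ x, F (e x) = ∑ x, F x :=
  Fintype.sum_bijective e he.bijective _ _ (fun _ => rfl)

lemma card_cube : (Fintype.card (Fin n → Bool) : ℝ) = 2^n := by
  simp [Fintype.card_fun]

lemma sum_chi_chi (x y : Fin n → Bool) :
    ∑ A : Finset (Fin n), chi A x * chi A y = if x = y then (2:ℝ)^n else 0 := by
  have h2 : ∏ i : Fin n, (sgn (x i) * sgn (y i) + 1)
      = ∑ A : Finset (Fin n), ∏ i ∈ A, (sgn (x i) * sgn (y i)) := by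
    rw [Finset.prod_add]
    simp [Finset.powerset_univ]
  calc ∑ A : Finset (Fin n), chi A x * chi A y
      = ∑ A : Finset (Fin n), ∏ i ∈ A, (sgn (x i) * sgn (y i)) :=
        Finset.sum_congr rfl (fun A _ => (Finset.prod_mul_distrib).symm)
    _ = ∏ i : Fin n, (sgn (x i) * sgn (y i) + 1) := h2.symm
    _ = if x = y then (2:ℝ)^n else 0 := by
        by_cases hxy : x = y
        · subst hxy
          simp [sgn_mul_self]
          norm_num
        · rw [if_neg hxy]
          obtain ⟨i, hi⟩ := Function.ne_iff.mp hxy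
          refine Finset.prod_eq_zero (Finset.mem_univ i) ?_
          cases hx : x i <;> cases hy : y i <;> simp_all [sgn]

lemma parseval (f : (Fin n → Bool) → ℝ) :
    ∑ A : Finset (Fin n), (∑ x, f x * chi A x)^2 = 2^n * ∑ x, (f x)^2 := by
  calc ∑ A : Finset (Fin n), (∑ x, f x * chi A x)^2
      = ∑ A : Finset (Fin n), ∑ x, ∑ y, (f x * f y) * (chi A x * chi A y) := by
        refine Finset.sum_congr rfl fun A _ => ?_
        rw [sq, Finset.sum_mul_sum]
        exact Finset.sum_congr rfl fun x _ => Finset.sum_congr rfl fun y _ => by ring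
    _ = ∑ x, ∑ y, ∑ A : Finset (Fin n), (f x * f y) * (chi A x * chi A y) := by
        rw [Finset.sum_comm]
        exact Finset.sum_congr rfl fun x _ => Finset.sum_comm
    _ = ∑ x, ∑ y, (f x * f y) * (if x = y then (2:ℝ)^n else 0) := by
        simp_rw [← Finset.mul_sum, sum_chi_chi]
    _ = ∑ x, (f x * f x) * (2:ℝ)^n := by
        refine Finset.sum_congr rfl fun x _ => ?_
        simp [mul_ite, mul_zero]
    _ = 2^n * ∑ x, (f x)^2 := by
        rw [Finset.mul_sum]; exact Finset.sum_congr rfl fun x _ => by ring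

lemma chi_flip1 (A : Finset (Fin n)) (i : Fin n) (x : Fin n → Bool) :
    chi A (flip1 i x) = (if i ∈ A then (-1:ℝ) else 1) * chi A x := by
  have h : ∀ j : Fin n, sgn (flip1 i x j) = (if j = i then (-1:ℝ) else 1) * sgn (x j) := by
    intro j; by_cases hj : j = i <;> simp [flip1, hj, sgn_not]
  calc chi A (flip1 i x) = ∏ j ∈ A, ((if j = i then (-1:ℝ) else 1) * sgn (x j)) :=
        Finset.prod_congr rfl fun j _ => h j
    _ = (∏ j ∈ A, (if j = i then (-1:ℝ) else 1)) * chi A x := Finset.prod_mul_distrib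
    _ = (if i ∈ A then (-1:ℝ) else 1) * chi A x := by
        congr 1
        by_cases hi : i ∈ A
        · rw [if_pos hi, Finset.prod_eq_single i (fun j _ hj => if_neg hj)
            (fun h => absurd hi h)]
          simp
        · rw [if_neg hi]
          exact Finset.prod_eq_one fun j hj => if_neg (fun h : j = i => hi (h ▸ hj))

lemma chi_flipAll (A : Finset (Fin n)) (x : Fin n → Bool) :
    chi A (flipAll x) = (-1:ℝ)^A.card * chi A x := by
  calc chi A (flipAll x) = ∏ j ∈ A, ((-1) * sgn (x j)) := by
        refine Finset.prod_congr rfl fun j _ => ?_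
        simp [flipAll, sgn_not]
    _ = (-1:ℝ)^A.card * chi A x := by
        rw [Finset.prod_mul_distrib, Finset.prod_const]
        rfl

lemma sgn_orth (j k : Fin n) :
    ∑ x : Fin n → Bool, sgn (x j) * sgn (x k) = if j = k then (2:ℝ)^n else 0 := by
  by_cases hjk : j = k
  · subst hjk
    rw [if_pos rfl]
    calc ∑ x : Fin n → Bool, sgn (x j) * sgn (x j)
        = ∑ _x : Fin n → Bool, (1:ℝ) := Finset.sum_congr rfl fun x _ => sgn_mul_self _
      _ = (2:ℝ)^n := by rw [Finset.sum_const, nsmul_eq_mul, mul_one, Finset.card_univ, card_cube]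
  · rw [if_neg hjk]
    have h := sum_comp_invol (flip1_invol j) (fun x => sgn (x j) * sgn (x k))
    have h2 : ∀ x : Fin n → Bool, sgn (flip1 j x j) * sgn (flip1 j x k)
        = -(sgn (x j) * sgn (x k)) := by
      intro x
      have e1 : flip1 j x j = !x j := by simp [flip1]
      have e2 : flip1 j x k = x k := by simp only [flip1, if_neg (fun h : k = j => hjk h.symm)]
      rw [e1, e2, sgn_not]; ring
    have key : (∑ x : Fin n → Bool, sgn (x j) * sgn (x k))
        = - ∑ x : Fin n → Bool, sgn (x j) * sgn (x k) := by
      calc (∑ x : Fin n → Bool, sgn (x j) * sgn (x k))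
          = ∑ x : Fin n → Bool, sgn (flip1 j x j) * sgn (flip1 j x k) := h.symm
        _ = ∑ x : Fin n → Bool, -(sgn (x j) * sgn (x k)) :=
            Finset.sum_congr rfl fun x _ => h2 x
        _ = - ∑ x : Fin n → Bool, sgn (x j) * sgn (x k) := by rw [Finset.sum_neg_distrib]
    linarith

lemma sum_S_sq (a : Fin n → ℝ) :
    ∑ x : Fin n → Bool, (∑ k, a k * sgn (x k))^2 = 2^n * ∑ k, (a k)^2 := by
  calc ∑ x : Fin n → Bool, (∑ k, a k * sgn (x k))^2
      = ∑ x : Fin n → Bool, ∑ j, ∑ k, (a j * a k) * (sgn (x j) * sgn (x k)) := by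
        refine Finset.sum_congr rfl fun x _ => ?_
        rw [sq, Finset.sum_mul_sum]
        exact Finset.sum_congr rfl fun j _ => Finset.sum_congr rfl fun k _ => by ring
    _ = ∑ j, ∑ k, ∑ x : Fin n → Bool, (a j * a k) * (sgn (x j) * sgn (x k)) := by
        rw [Finset.sum_comm]
        exact Finset.sum_congr rfl fun j _ => Finset.sum_comm
    _ = ∑ j, ∑ k, (a j * a k) * (if j = k then (2:ℝ)^n else 0) := by
        simp_rw [← Finset.mul_sum, sgn_orth]
    _ = ∑ j, (a j * a j) * (2:ℝ)^n := by
        refine Finset.sum_congr rfl fun j _ => ?_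
        simp [mul_ite, mul_zero]
    _ = 2^n * ∑ k, (a k)^2 := by
        rw [Finset.mul_sum]; exact Finset.sum_congr rfl fun j _ => by ring

noncomputable def Sa (a : Fin n → ℝ) (x : Fin n → Bool) : ℝ := ∑ k, a k * sgn (x k)
noncomputable def fa (a : Fin n → ℝ) (x : Fin n → Bool) : ℝ := |Sa a x|
noncomputable def ga (a : Fin n → ℝ) (A : Finset (Fin n)) : ℝ := ∑ x, fa a x * chi A x

variable (a : Fin n → ℝ)

lemma Sa_flipAll (x : Fin n → Bool) : Sa a (flipAll x) = - Sa a x := by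
  unfold Sa
  rw [← Finset.sum_neg_distrib]
  refine Finset.sum_congr rfl fun k _ => ?_
  simp [flipAll, sgn_not]

lemma fa_flipAll (x : Fin n → Bool) : fa a (flipAll x) = fa a x := by
  unfold fa; rw [Sa_flipAll, abs_neg]

lemma Sa_flip1 (i : Fin n) (x : Fin n → Bool) :
    Sa a x - Sa a (flip1 i x) = 2 * (a i * sgn (x i)) := by
  unfold Sa
  rw [← Finset.sum_sub_distrib]
  have h : ∀ k : Fin n, k ∈ Finset.univ → a k * sgn (x k) - a k * sgn (flip1 i x k)
      = if k = i then 2 * (a i * sgn (x i)) else 0 := by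
    intro k _
    by_cases hk : k = i
    · subst hk
      have : flip1 k x k = !x k := by simp [flip1]
      rw [this, sgn_not, if_pos rfl]; ring
    · have : flip1 i x k = x k := by simp only [flip1, if_neg hk]
      rw [this]; simp [hk]
  rw [Finset.sum_congr rfl h, Finset.sum_ite_eq' Finset.univ i _, if_pos (Finset.mem_univ i)]

lemma ga_empty : ga a ∅ = ∑ x, fa a x := by simp [ga, chi]

lemma ga_odd (A : Finset (Fin n)) (hA : Odd A.card) : ga a A = 0 := by
  have h := sum_comp_invol flipAll_invol (fun x => fa a x * chi A x)
  have key : ga a A = - ga a A := by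
    calc ga a A = ∑ x, fa a (flipAll x) * chi A (flipAll x) := h.symm
      _ = ∑ x, -(fa a x * chi A x) := by
          refine Finset.sum_congr rfl fun x _ => ?_
          rw [fa_flipAll, chi_flipAll, hA.neg_one_pow]; ring
      _ = - ga a A := by rw [Finset.sum_neg_distrib]; rfl
  linarith

lemma coeff_flip (i : Fin n) (A : Finset (Fin n)) :
    ∑ x, fa a (flip1 i x) * chi A x = (if i ∈ A then (-1:ℝ) else 1) * ga a A := by
  calc ∑ x, fa a (flip1 i x) * chi A x
      = ∑ x, fa a (flip1 i (flip1 i x)) * chi A (flip1 i x) :=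
        (sum_comp_invol (flip1_invol i) (fun x => fa a (flip1 i x) * chi A x)).symm
    _ = ∑ x, (if i ∈ A then (-1:ℝ) else 1) * (fa a x * chi A x) := by
        refine Finset.sum_congr rfl fun x _ => ?_
        rw [flip1_invol i x, chi_flip1]; ring
    _ = (if i ∈ A then (-1:ℝ) else 1) * ga a A := by rw [← Finset.mul_sum]; rfl

lemma Dcoeff (i : Fin n) (A : Finset (Fin n)) :
    ∑ x, ((fa a x - fa a (flip1 i x))/2) * chi A x = if i ∈ A then ga a A else 0 := by
  have h : ∀ x : Fin n → Bool, x ∈ Finset.univ → ((fa a x - fa a (flip1 i x))/2) * chi A x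
      = (fa a x * chi A x)/2 - (fa a (flip1 i x) * chi A x)/2 := fun x _ => by ring
  rw [Finset.sum_congr rfl h, Finset.sum_sub_distrib, ← Finset.sum_div, ← Finset.sum_div,
    coeff_flip]
  by_cases hi : i ∈ A
  · rw [if_pos hi, if_pos hi]
    rw [show ∑ x, fa a x * chi A x = ga a A from rfl]
    ring
  · rw [if_neg hi, if_neg hi]
    rw [show ∑ x, fa a x * chi A x = ga a A from rfl]
    ring

lemma Dbound (i : Fin n) (x : Fin n → Bool) :
    ((fa a x - fa a (flip1 i x))/2)^2 ≤ (a i)^2 := by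
  have h1 : |fa a x - fa a (flip1 i x)| ≤ |Sa a x - Sa a (flip1 i x)| :=
    abs_abs_sub_abs_le_abs_sub _ _
  rw [Sa_flip1] at h1
  have h2 : |2 * (a i * sgn (x i))| = 2 * |a i| := by
    rw [abs_mul, abs_mul, abs_sgn, abs_two]; ring
  rw [h2] at h1
  have h3 := sq_abs (fa a x - fa a (flip1 i x))
  have h4 := sq_abs (a i)
  have h5 := abs_nonneg (fa a x - fa a (flip1 i x))
  have h6 := abs_nonneg (a i)
  nlinarith

lemma DSum (i : Fin n) :
    ∑ A : Finset (Fin n), (if i ∈ A then ga a A else 0)^2 ≤ ((2:ℝ)^n)^2 * (a i)^2 := by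
  have e1 : ∑ A : Finset (Fin n), (if i ∈ A then ga a A else 0)^2
      = (2:ℝ)^n * ∑ x, ((fa a x - fa a (flip1 i x))/2)^2 := by
    rw [← parseval (fun x => (fa a x - fa a (flip1 i x))/2)]
    exact Finset.sum_congr rfl fun A _ => by rw [Dcoeff a i A]
  rw [e1]
  have h2 : ∑ x : Fin n → Bool, ((fa a x - fa a (flip1 i x))/2)^2
      ≤ ∑ _x : Fin n → Bool, (a i)^2 :=
    Finset.sum_le_sum fun x _ => Dbound a i x
  have h3 : ∑ _x : Fin n → Bool, (a i)^2 = (2:ℝ)^n * (a i)^2 := by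
    rw [Finset.sum_const, nsmul_eq_mul, Finset.card_univ, card_cube]
  have hN : (0:ℝ) ≤ (2:ℝ)^n := by positivity
  calc (2:ℝ)^n * ∑ x, ((fa a x - fa a (flip1 i x))/2)^2
      ≤ (2:ℝ)^n * ((2:ℝ)^n * (a i)^2) := by
        apply mul_le_mul_of_nonneg_left _ hN
        rw [← h3]; exact h2
    _ = ((2:ℝ)^n)^2 * (a i)^2 := by ring

lemma sum_card_le :
    ∑ A : Finset (Fin n), (A.card : ℝ) * (ga a A)^2 ≤ ((2:ℝ)^n)^2 * ∑ k, (a k)^2 := by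
  have swap : ∑ A : Finset (Fin n), (A.card : ℝ) * (ga a A)^2
      = ∑ i : Fin n, ∑ A : Finset (Fin n), (if i ∈ A then ga a A else 0)^2 := by
    rw [Finset.sum_comm]
    refine Finset.sum_congr rfl fun A _ => ?_
    have h : ∀ i : Fin n, i ∈ Finset.univ → (if i ∈ A then ga a A else 0)^2
        = if i ∈ A then (ga a A)^2 else 0 := by
      intro i _; split <;> simp
    rw [Finset.sum_congr rfl h, Finset.sum_ite_mem, Finset.univ_inter, Finset.sum_const,
      nsmul_eq_mul]
  rw [swap]
  calc ∑ i : Fin n, ∑ A : Finset (Fin n), (if i ∈ A then ga a A else 0)^2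
      ≤ ∑ i : Fin n, ((2:ℝ)^n)^2 * (a i)^2 := Finset.sum_le_sum fun i _ => DSum a i
    _ = ((2:ℝ)^n)^2 * ∑ k, (a k)^2 := by rw [← Finset.mul_sum]

lemma lower_bd :
    2 * (∑ A : Finset (Fin n), (ga a A)^2) - 2 * (ga a ∅)^2
      ≤ ∑ A : Finset (Fin n), (A.card : ℝ) * (ga a A)^2 := by
  have per_A : ∀ A : Finset (Fin n), A ∈ Finset.univ →
      (if A = ∅ then 0 else 2 * (ga a A)^2) ≤ (A.card : ℝ) * (ga a A)^2 := by
    intro A _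
    by_cases hA : A = ∅
    · simp [hA]
    · rw [if_neg hA]
      rcases Nat.lt_or_ge A.card 2 with h | h
      · have hc : A.card ≠ 0 := fun hc => hA (Finset.card_eq_zero.mp hc)
        have h1 : A.card = 1 := by omega
        have : ga a A = 0 := ga_odd a A (by rw [h1]; exact odd_one)
        simp [this]
      · have h2 : (2:ℝ) ≤ (A.card : ℝ) := by exact_mod_cast h
        nlinarith [sq_nonneg (ga a A)]
  have step := Finset.sum_le_sum per_A
  have e : ∀ A : Finset (Fin n), A ∈ Finset.univ → (if A = ∅ then (0:ℝ) else 2 * (ga a A)^2)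
      = 2*(ga a A)^2 - (if A = ∅ then 2*(ga a A)^2 else 0) := by
    intro A _; split <;> ring
  rw [Finset.sum_congr rfl e, Finset.sum_sub_distrib,
    Finset.sum_ite_eq' Finset.univ ∅ (fun A => 2*(ga a A)^2), if_pos (Finset.mem_univ _),
    ← Finset.mul_sum] at step
  exact step

/-- The sharp `L¹` Khintchine inequality with Szarek's constant `1/√2`. -/
lemma szarek :
    (2:ℝ)^n * Real.sqrt (∑ k, (a k)^2)
      ≤ Real.sqrt 2 * ∑ x : Fin n → Bool, |∑ k, a k * sgn (x k)| := by
  have gsq : ∑ A : Finset (Fin n), (ga a A)^2 = ((2:ℝ)^n)^2 * ∑ k, (a k)^2 := by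
    have hp := parseval (fa a)
    have hf : ∑ x, (fa a x)^2 = (2:ℝ)^n * ∑ k, (a k)^2 := by
      rw [← sum_S_sq a]
      exact Finset.sum_congr rfl fun x _ => by rw [fa, sq_abs]; rfl
    calc ∑ A : Finset (Fin n), (ga a A)^2 = 2^n * ∑ x, (fa a x)^2 := hp
      _ = ((2:ℝ)^n)^2 * ∑ k, (a k)^2 := by rw [hf]; ring
  have key : ((2:ℝ)^n)^2 * ∑ k, (a k)^2 ≤ 2 * (∑ x, fa a x)^2 := by
    have h1 := lower_bd a
    have h2 := sum_card_le a
    rw [gsq, ga_empty] at h1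
    linarith
  have hsum0 : 0 ≤ ∑ x, fa a x := Finset.sum_nonneg fun x _ => abs_nonneg _
  have hNσ : (0:ℝ) ≤ ((2:ℝ)^n)^2 := by positivity
  calc (2:ℝ)^n * Real.sqrt (∑ k, (a k)^2)
      = Real.sqrt (((2:ℝ)^n)^2 * ∑ k, (a k)^2) := by
        rw [Real.sqrt_mul hNσ, Real.sqrt_sq (by positivity : (0:ℝ) ≤ (2:ℝ)^n)]
    _ ≤ Real.sqrt (2 * (∑ x, fa a x)^2) := Real.sqrt_le_sqrt key
    _ = Real.sqrt 2 * ∑ x, fa a x := by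
        rw [Real.sqrt_mul (by norm_num : (0:ℝ) ≤ 2), Real.sqrt_sq hsum0]
    _ = Real.sqrt 2 * ∑ x : Fin n → Bool, |∑ k, a k * sgn (x k)| := rfl

/-- Symmetrization: the symmetrized sum is at most twice the `{0,1}`-cube sum. -/
lemma desym (r : Fin n → ℝ) :
    ∑ x : Fin n → Bool, |∑ k, r k * sgn (x k)|
      ≤ 2 * ∑ x : Fin n → Bool, |∑ k, r k * (if x k then (1:ℝ) else 0)| := by
  have hpt : ∀ x : Fin n → Bool, |∑ k, r k * sgn (x k)|
      ≤ |∑ k, r k * (if x k then (1:ℝ) else 0)|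
        + |∑ k, r k * (if flipAll x k then (1:ℝ) else 0)| := by
    intro x
    have hid : ∑ k, r k * sgn (x k)
        = (∑ k, r k * (if x k then (1:ℝ) else 0))
          - ∑ k, r k * (if flipAll x k then (1:ℝ) else 0) := by
      rw [← Finset.sum_sub_distrib]
      refine Finset.sum_congr rfl fun k _ => ?_
      cases hx : x k <;> simp [sgn, flipAll, hx]
    rw [hid, sub_eq_add_neg]
    calc |_ + -(∑ k, r k * (if flipAll x k then (1:ℝ) else 0))|
        ≤ |∑ k, r k * (if x k then (1:ℝ) else 0)|
          + |-(∑ k, r k * (if flipAll x k then (1:ℝ) else 0))| := abs_add_le _ _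
      _ = _ := by rw [abs_neg]
  calc ∑ x : Fin n → Bool, |∑ k, r k * sgn (x k)|
      ≤ ∑ x : Fin n → Bool, (|∑ k, r k * (if x k then (1:ℝ) else 0)|
          + |∑ k, r k * (if flipAll x k then (1:ℝ) else 0)|) :=
        Finset.sum_le_sum fun x _ => hpt x
    _ = (∑ x : Fin n → Bool, |∑ k, r k * (if x k then (1:ℝ) else 0)|)
        + ∑ x : Fin n → Bool, |∑ k, r k * (if flipAll x k then (1:ℝ) else 0)| :=
        Finset.sum_add_distrib
    _ = 2 * ∑ x : Fin n → Bool, |∑ k, r k * (if x k then (1:ℝ) else 0)| := by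
        rw [sum_comp_invol flipAll_invol
          (fun y => |∑ k, r k * (if y k then (1:ℝ) else 0)|)]
        ring

end SzAux

/-- the expected `ℓ₁`-norm of a uniformly random vertex of the rotated
Hamming cube is at least `d/(2√2)`, stated as a sum over all `2^d` vertices. -/
theorem expected_l1_norm_rotated_cube (d : ℕ) (hd : 1 ≤ d)
    (O : Matrix (Fin d) (Fin d) ℝ) (hO : IsOrthogonalMat O) :
    (2 : ℝ) ^ d * ((d : ℝ) / (2 * Real.sqrt 2))
      ≤ ∑ x : Fin d → Bool, l1Norm (O.mulVec (bitVec x)) := by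
  have hs2 : (0:ℝ) < Real.sqrt 2 := by positivity
  have hrow : ∀ i : Fin d, ∑ k, (O i k)^2 = 1 := by
    intro i
    have h : (O * O.transpose) i i = (1 : Matrix (Fin d) (Fin d) ℝ) i i := by rw [hO.2]
    rw [Matrix.mul_apply, Matrix.one_apply_eq] at h
    calc ∑ k, (O i k)^2 = ∑ k, O i k * O.transpose k i :=
          Finset.sum_congr rfl fun k _ => by rw [Matrix.transpose_apply, sq]
      _ = 1 := h
  have hrowbound : ∀ i : Fin d, (2:ℝ)^d / (2 * Real.sqrt 2)
      ≤ ∑ x : Fin d → Bool, |∑ k, O i k * bitVec x k| := by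
    intro i
    have h1 := SzAux.szarek (fun k => O i k)
    rw [hrow i, Real.sqrt_one, mul_one] at h1
    have h2 := SzAux.desym (fun k => O i k)
    rw [div_le_iff₀ (by positivity)]
    calc (2:ℝ)^d ≤ Real.sqrt 2 * ∑ x : Fin d → Bool, |∑ k, O i k * SzAux.sgn (x k)| := h1
      _ ≤ Real.sqrt 2 * (2 * ∑ x : Fin d → Bool, |∑ k, O i k * bitVec x k|) := by
          apply mul_le_mul_of_nonneg_left _ hs2.le
          simpa [bitVec] using h2
      _ = (∑ x : Fin d → Bool, |∑ k, O i k * bitVec x k|) * (2 * Real.sqrt 2) := by ring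
  calc (2:ℝ)^d * ((d:ℝ)/(2*Real.sqrt 2))
      = ∑ _i : Fin d, (2:ℝ)^d/(2*Real.sqrt 2) := by
        rw [Finset.sum_const, nsmul_eq_mul, Finset.card_univ, Fintype.card_fin]
        ring
    _ ≤ ∑ i : Fin d, ∑ x : Fin d → Bool, |∑ k, O i k * bitVec x k| :=
        Finset.sum_le_sum fun i _ => hrowbound i
    _ = ∑ x : Fin d → Bool, l1Norm (O.mulVec (bitVec x)) := by
        rw [Finset.sum_comm]
        refine Finset.sum_congr rfl fun x _ => ?_
        unfold l1Norm
        refine Finset.sum_congr rfl fun i _ => ?_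
        simp [Matrix.mulVec, dotProduct]
end

section
/- Let d ≥ 1, let O be a d×d real orthogonal matrix, and for x ∈ {0,1}^d define s(x) ∈ {−1,1}^d by s(x)_j = 1 if (Ox)_j ≥ 0 and s(x)_j = −1 otherwise, and c_j(x) = |(Oᵀ s(x))_j| for j = 1,…,d. Then: (i) for all x, y ∈ {0,1}^d, ‖Ox‖₁ − ‖Oy‖₁ ≤ Σ_{j : x_j ≠ y_j} c_j(x); and (ii) for all x ∈ {0,1}^d, Σ_{j=1}^d c_j(x)² = d. -/
open scoped Classical BigOperators

/-- The sign vector `s(x) ∈ {−1,1}^d` of `Ox`. -/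
noncomputable def signVec {d : ℕ} (O : Matrix (Fin d) (Fin d) ℝ) (x : Fin d → Bool) :
    Fin d → ℝ :=
  fun j => if 0 ≤ O.mulVec (bitVec x) j then 1 else -1

/-- The coordinate Lipschitz constants `c_j(x) = |(Oᵀs(x))_j|`. -/
noncomputable def coordLip {d : ℕ} (O : Matrix (Fin d) (Fin d) ℝ) (x : Fin d → Bool)
    (j : Fin d) : ℝ :=
  |O.transpose.mulVec (signVec O x) j|

/-! Proof idea: `s(x)` is a subgradient of the `ℓ₁`-norm at `Ox`, so
`‖Ox‖₁ − ‖Oy‖₁ ≤ s(x) ⬝ O(x − y) = Oᵀs(x) ⬝ (x − y)`, and `x − y` has entries in `{−1, 0, 1}`,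
nonzero exactly where `x` and `y` differ. Since `Oᵀ` is an isometry,
`Σ_j c_j(x)² = ‖Oᵀs(x)‖₂² = ‖s(x)‖₂² = d`. -/

open Matrix

theorem abs_sub_abs_le_mul_sub {s a b : ℝ} (hs : |s| ≤ 1) (hsa : s * a = |a|) :
    |a| - |b| ≤ s * (a - b) := by
  have : s * b ≤ |b| :=
    calc s * b ≤ |s * b| := le_abs_self _
      _ = |s| * |b| := abs_mul s b
      _ ≤ |b| := mul_le_of_le_one_left (abs_nonneg b) hs
  linarith

theorem l1Norm_sub_l1Norm_le_dotProduct {d : ℕ} {s u v : Fin d → ℝ} (hs : ∀ j, |s j| ≤ 1)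
    (hsu : ∀ j, s j * u j = |u j|) : l1Norm u - l1Norm v ≤ s ⬝ᵥ (u - v) := by
  rw [l1Norm, l1Norm, ← Finset.sum_sub_distrib]
  exact Finset.sum_le_sum fun j _ => abs_sub_abs_le_mul_sub (hs j) (hsu j)

theorem dotProduct_bitVec_sub_le {d : ℕ} (a : Fin d → ℝ) (x y : Fin d → Bool) :
    a ⬝ᵥ (bitVec x - bitVec y) ≤ ∑ j ∈ Finset.univ.filter (fun j => x j ≠ y j), |a j| := by
  rw [dotProduct, Finset.sum_filter]
  refine Finset.sum_le_sum fun j _ => ?_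
  simp only [Pi.sub_apply, bitVec]
  cases x j <;> cases y j <;> simp [le_abs_self, neg_le_abs]

theorem transpose_mulVec_dotProduct_self {n : Type*} [Fintype n] [DecidableEq n]
    {O : Matrix n n ℝ} (hO : O * Oᵀ = 1) (s : n → ℝ) : Oᵀ *ᵥ s ⬝ᵥ Oᵀ *ᵥ s = s ⬝ᵥ s := by
  rw [dotProduct_mulVec, vecMul_transpose, mulVec_mulVec, hO, one_mulVec, dotProduct_comm]

section signVec

variable {d : ℕ} (O : Matrix (Fin d) (Fin d) ℝ) (x : Fin d → Bool)

theorem signVec_mul_mulVec_bitVec (j : Fin d) :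
    signVec O x j * (O *ᵥ bitVec x) j = |(O *ᵥ bitVec x) j| := by
  unfold signVec
  split_ifs with h
  · rw [abs_of_nonneg h, one_mul]
  · rw [abs_of_neg (not_le.mp h), neg_one_mul]

theorem abs_signVec (j : Fin d) : |signVec O x j| = 1 := by
  unfold signVec; split_ifs <;> simp

theorem signVec_dotProduct_self : signVec O x ⬝ᵥ signVec O x = d := by
  simp [dotProduct, ← abs_mul_abs_self (signVec O x _), abs_signVec]

end signVec

theorem coord_lipschitz_rotated_cube_general (d : ℕ)
    (O : Matrix (Fin d) (Fin d) ℝ) (hO : IsOrthogonalMat O) :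
    (∀ x y : Fin d → Bool,
      l1Norm (O.mulVec (bitVec x)) - l1Norm (O.mulVec (bitVec y))
        ≤ ∑ j ∈ Finset.univ.filter (fun j => x j ≠ y j), coordLip O x j) ∧
    (∀ x : Fin d → Bool, ∑ j, (coordLip O x j) ^ 2 = (d : ℝ)) := by
  refine ⟨fun x y => ?_, fun x => ?_⟩
  · calc l1Norm (O *ᵥ bitVec x) - l1Norm (O *ᵥ bitVec y)
        ≤ signVec O x ⬝ᵥ (O *ᵥ bitVec x - O *ᵥ bitVec y) :=
          l1Norm_sub_l1Norm_le_dotProduct (fun j => (abs_signVec O x j).le)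
            (signVec_mul_mulVec_bitVec O x)
      _ = Oᵀ *ᵥ signVec O x ⬝ᵥ (bitVec x - bitVec y) := by
          rw [← mulVec_sub, dotProduct_mulVec, mulVec_transpose]
      _ ≤ _ := dotProduct_bitVec_sub_le _ x y
  · calc ∑ j, coordLip O x j ^ 2 = Oᵀ *ᵥ signVec O x ⬝ᵥ Oᵀ *ᵥ signVec O x := by
          simp only [coordLip, dotProduct, sq, abs_mul_abs_self]
      _ = signVec O x ⬝ᵥ signVec O x := transpose_mulVec_dotProduct_self hO.2 _
      _ = d := signVec_dotProduct_self O x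

/-- (i) the coordinate-Lipschitz property of `x ↦ ‖Ox‖₁` on the Hamming
cube with constants `c_j(x)`, and (ii) `Σ_j c_j(x)² = d`. -/
theorem coord_lipschitz_rotated_cube (d : ℕ) (hd : 1 ≤ d)
    (O : Matrix (Fin d) (Fin d) ℝ) (hO : IsOrthogonalMat O) :
    (∀ x y : Fin d → Bool,
      l1Norm (O.mulVec (bitVec x)) - l1Norm (O.mulVec (bitVec y))
        ≤ ∑ j ∈ Finset.univ.filter (fun j => x j ≠ y j), coordLip O x j) ∧
    (∀ x : Fin d → Bool, ∑ j, (coordLip O x j) ^ 2 = (d : ℝ)) :=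
  coord_lipschitz_rotated_cube_general d O hO
end

section
/- Let d ≥ 1, let O be a d×d real orthogonal matrix, and set μ = 2^{−d} Σ_{x ∈ {0,1}^d} ‖Ox‖₁. Then for every real t, 2^{−d} Σ_{x ∈ {0,1}^d} exp( t·(‖Ox‖₁ − μ) ) ≤ exp( t²d/2 ). In other words, for x uniform on {0,1}^d the random variable ‖Ox‖₁ is subgaussian with variance proxy d. -/
/-!
For convex `h` on `ℝⁿ`, let `Qh` be its infimal convolution with `‖·‖²/2`. The uniform measure on
`{0,1}ⁿ` has Maurey's property (τ): `𝔼 e^{Qh} · 𝔼 e^{-h} ≤ 1`. On `{0,1}` this is the two-point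
inequality `(1 + e^{s - s²/2})(1 + e^{-s}) ≤ 4` for `s ∈ [0,1]`, a consequence of
`cosh x ≤ e^{x²/2}`; it tensorises by induction on `n`, Cauchy–Schwarz (in Titu's form, weighted by
the masses `Σ e^{-h}` of the two slices) combining the two induction hypotheses.

`f x = ‖Ox‖₁` is convex and, `O` being an isometry, `√d`-Lipschitz for the Euclidean norm, so
`Q(λf) ≥ λf - λ²d/2` and `𝔼 e^{λf} · 𝔼 e^{-λf} ≤ e^{λ²d/2}`. Jensen's `𝔼 e^{-λ(f - 𝔼f)} ≥ 1` turns
this into the bound on the centred moment generating function.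
-/

open scoped BigOperators

open Real Set Finset
open scoped Matrix

-- A junk value (`0`) unless `y ↦ h y + c (x - y)` is bounded below.
noncomputable def infConv {E : Type*} [Sub E] (h c : E → ℝ) (x : E) : ℝ :=
  ⨅ y, h y + c (x - y)

section InfConv

variable {E : Type*} [AddCommGroup E] {h c : E → ℝ}

theorem bddBelow_range_add_comp_sub (hh : BddBelow (range h)) (hc : ∀ v, 0 ≤ c v) (x : E) :
    BddBelow (range fun y => h y + c (x - y)) := by
  obtain ⟨b, hb⟩ := hh
  exact ⟨b, by rintro _ ⟨y, rfl⟩; linarith [hb ⟨y, rfl⟩, hc (x - y)]⟩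

theorem infConv_le (hh : BddBelow (range h)) (hc : ∀ v, 0 ≤ c v) (x y : E) :
    infConv h c x ≤ h y + c (x - y) :=
  ciInf_le (bddBelow_range_add_comp_sub hh hc x) y

theorem infConv_le_self (hh : BddBelow (range h)) (hc : ∀ v, 0 ≤ c v) (hc₀ : c 0 = 0) (x : E) :
    infConv h c x ≤ h x := by
  simpa [hc₀] using infConv_le hh hc x x

theorem le_infConv {b : ℝ} (hb : ∀ y, b ≤ h y) (hc : ∀ v, 0 ≤ c v) (x : E) :
    b ≤ infConv h c x :=
  le_ciInf fun y => by linarith [hb y, hc (x - y)]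

end InfConv

theorem convexOn_ciInf_of_convexOn_uncurry {E F : Type*} [AddCommGroup E] [Module ℝ E]
    [AddCommGroup F] [Module ℝ F] {W : E → F → ℝ}
    (hW : ConvexOn ℝ univ (Function.uncurry W)) (hbdd : ∀ e, BddBelow (range (W e))) :
    ConvexOn ℝ univ fun e => ⨅ f, W e f := by
  refine ⟨convex_univ, fun x _ y _ a b ha hb hab => le_of_forall_pos_le_add fun ε hε => ?_⟩
  obtain ⟨f, hf⟩ := exists_lt_of_ciInf_lt (lt_add_of_pos_right (⨅ f, W x f) hε)
  obtain ⟨g, hg⟩ := exists_lt_of_ciInf_lt (lt_add_of_pos_right (⨅ f, W y f) hε)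
  have hcomb := hW.2 (mem_univ (x, f)) (mem_univ (y, g)) ha hb hab
  simp only [Function.uncurry, Prod.fst_add, Prod.snd_add, Prod.smul_fst, Prod.smul_snd,
    smul_eq_mul] at hcomb
  calc ⨅ f, W (a • x + b • y) f ≤ W (a • x + b • y) (a • f + b • g) := ciInf_le (hbdd _) _
    _ ≤ a * W x f + b * W y g := hcomb
    _ ≤ a * ((⨅ f, W x f) + ε) + b * ((⨅ f, W y f) + ε) := by gcongr
    _ = a • (⨅ f, W x f) + b • (⨅ f, W y f) + ε := by
      simp only [smul_eq_mul]; linear_combination ε * hab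

theorem one_add_exp_two_mul (x : ℝ) : 1 + exp (2 * x) = 2 * exp x * cosh x := by
  rw [cosh_eq, exp_neg, two_mul, exp_add]
  field_simp
  ring

theorem one_add_exp_mul_one_add_exp_neg_le_four {s : ℝ} (hs₀ : 0 ≤ s) (hs₁ : s ≤ 1) :
    (1 + exp (s - s ^ 2 / 2)) * (1 + exp (-s)) ≤ 4 := by
  set u := (s - s ^ 2 / 2) / 2
  set v := s / 2
  have hexp : u - v + u ^ 2 / 2 + v ^ 2 / 2 = -(s ^ 3 * (4 - s) / 32) := by
    simp only [u, v]
    ring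
  calc (1 + exp (s - s ^ 2 / 2)) * (1 + exp (-s)) = (1 + exp (2 * u)) * (1 + exp (2 * -v)) := by
        simp only [u, v]
        ring_nf
    _ = 4 * exp (u - v) * (cosh u * cosh v) := by
        rw [one_add_exp_two_mul, one_add_exp_two_mul, cosh_neg, exp_sub, exp_neg]
        ring
    _ ≤ 4 * exp (u - v) * (exp (u ^ 2 / 2) * exp (v ^ 2 / 2)) := by
        gcongr <;> exact cosh_le_exp_half_sq _
    _ = 4 * exp (u - v + u ^ 2 / 2 + v ^ 2 / 2) := by rw [exp_add, exp_add]; ring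
    _ ≤ 4 := by
        rw [hexp, mul_le_iff_le_one_right four_pos, exp_le_one_iff, neg_nonpos]
        have : 0 ≤ 4 - s := by linarith
        positivity

theorem exp_infConv_add_exp_infConv_mul_le_four_of_le {φ : ℝ → ℝ} (hφ : ConvexOn ℝ univ φ)
    (hb : BddBelow (range φ)) {p q : ℝ} (hpq : (q - p) ^ 2 = 1) (hle : φ p ≤ φ q) :
    (exp (infConv φ (· ^ 2 / 2) p) + exp (infConv φ (· ^ 2 / 2) q)) * (exp (-φ p) + exp (-φ q))
      ≤ 4 := by
  have hc : ∀ r : ℝ, 0 ≤ r ^ 2 / 2 := fun r => by positivity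
  set m := min (φ q - φ p) 1
  have hm₀ : 0 ≤ m := le_min (by linarith) zero_le_one
  have hm : (1 - m) * (φ q - φ p - m) = 0 := by
    rcases min_choice (φ q - φ p) 1 with h | h <;> simp [m, h]
  have hQp : infConv φ (· ^ 2 / 2) p ≤ φ p :=
    infConv_le_self hb hc (by norm_num) p
  -- move from `q` towards `p` by the distance `m`
  have hQq : infConv φ (· ^ 2 / 2) q ≤ φ p + (m - m ^ 2 / 2) := by
    have hconv := hφ.2 (mem_univ p) (mem_univ q) hm₀
      (show 0 ≤ 1 - m from sub_nonneg.2 (min_le_right _ _)) (add_sub_cancel m 1)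
    have hQ := infConv_le hb hc q (m • p + (1 - m) • q)
    simp only [smul_eq_mul] at hconv hQ
    have hsq : (q - (m * p + (1 - m) * q)) ^ 2 = m ^ 2 := by linear_combination m ^ 2 * hpq
    rw [hsq] at hQ
    linarith
  have hφq : -φ q ≤ -φ p - m := by linarith [min_le_left (φ q - φ p) 1]
  calc (exp (infConv φ (· ^ 2 / 2) p) + exp (infConv φ (· ^ 2 / 2) q)) * (exp (-φ p) + exp (-φ q))
      ≤ (exp (φ p) + exp (φ p + (m - m ^ 2 / 2))) * (exp (-φ p) + exp (-φ p - m)) := by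
        gcongr
    _ = (1 + exp (m - m ^ 2 / 2)) * (1 + exp (-m)) := by
        simp only [exp_add, exp_sub, exp_neg]
        field_simp
    _ ≤ 4 := one_add_exp_mul_one_add_exp_neg_le_four hm₀ (min_le_right _ _)

theorem exp_infConv_add_exp_infConv_mul_le_four {φ : ℝ → ℝ} (hφ : ConvexOn ℝ univ φ)
    (hb : BddBelow (range φ)) :
    (exp (infConv φ (· ^ 2 / 2) 0) + exp (infConv φ (· ^ 2 / 2) 1)) * (exp (-φ 0) + exp (-φ 1))
      ≤ 4 := by
  rcases le_total (φ 0) (φ 1) with h | h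
  · exact exp_infConv_add_exp_infConv_mul_le_four_of_le hφ hb (by norm_num) h
  · rw [add_comm (exp (infConv _ _ 0)), add_comm (exp (-φ 0))]
    exact exp_infConv_add_exp_infConv_mul_le_four_of_le hφ hb (by norm_num) h

theorem exp_infConv_add_exp_infConv_mul_sq_le {φ : ℝ → ℝ} (hφ : ConvexOn ℝ univ φ)
    (hb : BddBelow (range φ)) (w₀ w₁ : ℝ) :
    (exp (infConv φ (· ^ 2 / 2) 0) + exp (infConv φ (· ^ 2 / 2) 1)) * (w₀ + w₁) ^ 2
      ≤ 4 * (w₀ ^ 2 * exp (φ 0) + w₁ ^ 2 * exp (φ 1)) := by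
  set G := exp (-φ 0) + exp (-φ 1)
  have hG : 0 < G := by positivity
  have htitu : (w₀ + w₁) ^ 2 / G ≤ w₀ ^ 2 * exp (φ 0) + w₁ ^ 2 * exp (φ 1) := by
    simpa [G, Fin.sum_univ_two, exp_neg, div_inv_eq_mul] using
      sq_sum_div_le_sum_sq_div univ ![w₀, w₁] (g := ![exp (-φ 0), exp (-φ 1)])
        (by simp [Fin.forall_fin_two, exp_pos])
  calc (exp (infConv φ (· ^ 2 / 2) 0) + exp (infConv φ (· ^ 2 / 2) 1)) * (w₀ + w₁) ^ 2
      = (exp (infConv φ (· ^ 2 / 2) 0) + exp (infConv φ (· ^ 2 / 2) 1)) * G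
        * ((w₀ + w₁) ^ 2 / G) := by field_simp
    _ ≤ 4 * (w₀ ^ 2 * exp (φ 0) + w₁ ^ 2 * exp (φ 1)) := by
      gcongr
      exact exp_infConv_add_exp_infConv_mul_le_four hφ hb

section Cube

variable {n : ℕ}

noncomputable def halfSqNorm (v : Fin n → ℝ) : ℝ := (∑ j, v j ^ 2) / 2

theorem halfSqNorm_nonneg (v : Fin n → ℝ) : 0 ≤ halfSqNorm v := by
  unfold halfSqNorm; positivity

theorem halfSqNorm_cons_sub_cons (u s : ℝ) (x y : Fin n → ℝ) :
    halfSqNorm (Fin.cons u x - Fin.cons s y : Fin (n + 1) → ℝ)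
      = (u - s) ^ 2 / 2 + halfSqNorm (x - y) := by
  simp only [halfSqNorm, Fin.sum_univ_succ, Pi.sub_apply, Fin.cons_zero, Fin.cons_succ]
  ring

theorem convexOn_halfSqNorm : ConvexOn ℝ univ (halfSqNorm : (Fin n → ℝ) → ℝ) := by
  refine ⟨convex_univ, fun x _ y _ a b ha hb hab => ?_⟩
  have hsq j := (Even.convexOn_pow (𝕜 := ℝ) even_two).2 (mem_univ (x j)) (mem_univ (y j)) ha hb hab
  simp only [halfSqNorm, smul_eq_mul, Pi.add_apply, Pi.smul_apply] at hsq ⊢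
  rw [mul_div_assoc', mul_div_assoc', ← add_div, Finset.mul_sum, Finset.mul_sum,
    ← Finset.sum_add_distrib]
  gcongr with j
  exact hsq j

theorem bitVec_cons (b : Bool) (ε : Fin n → Bool) :
    bitVec (Fin.cons b ε : Fin (n + 1) → Bool) = Fin.cons (if b then 1 else 0) (bitVec ε) := by
  ext i
  refine Fin.cases ?_ (fun j => ?_) i <;> simp [bitVec]

theorem sum_bitVec_succ {M : Type*} [AddCommMonoid M] (F : (Fin (n + 1) → ℝ) → M) :
    ∑ ε : Fin (n + 1) → Bool, F (bitVec ε)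
      = ∑ ε : Fin n → Bool, F (Fin.cons 0 (bitVec ε))
        + ∑ ε : Fin n → Bool, F (Fin.cons 1 (bitVec ε)) := by
  rw [← Fintype.sum_equiv (Fin.consEquiv fun _ => Bool) (fun p => F (bitVec (Fin.cons p.1 p.2)))
    _ (fun _ => rfl), Fintype.sum_prod_type, Fintype.sum_bool, add_comm]
  simp [bitVec_cons]

theorem bddBelow_range_comp_cons {h : (Fin (n + 1) → ℝ) → ℝ} (hb : BddBelow (range h)) (s : ℝ) :
    BddBelow (range fun y : Fin n → ℝ => h (Fin.cons s y)) :=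
  hb.mono (range_comp_subset_range _ h)

theorem convexOn_comp_cons {h : (Fin (n + 1) → ℝ) → ℝ} (hh : ConvexOn ℝ univ h) (s : ℝ) :
    ConvexOn ℝ univ fun y : Fin n → ℝ => h (Fin.cons s y) := by
  refine ⟨convex_univ, fun x _ y _ a b ha hb hab => ?_⟩
  have hcons : (Fin.cons s (a • x + b • y) : Fin (n + 1) → ℝ)
      = a • Fin.cons s x + b • Fin.cons s y := by
    ext i
    refine Fin.cases ?_ (fun j => ?_) i
    · simp only [Fin.cons_zero, Pi.add_apply, Pi.smul_apply, smul_eq_mul]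
      linear_combination -s * hab
    · simp
  simpa only [hcons] using hh.2 (mem_univ _) (mem_univ _) ha hb hab

noncomputable def infConvTail (h : (Fin (n + 1) → ℝ) → ℝ) (x : Fin n → ℝ) (s : ℝ) : ℝ :=
  infConv (fun y => h (Fin.cons s y)) halfSqNorm x

theorem bddBelow_range_infConvTail {h : (Fin (n + 1) → ℝ) → ℝ} (hb : BddBelow (range h))
    (x : Fin n → ℝ) : BddBelow (range (infConvTail h x)) := by
  obtain ⟨b, hb⟩ := hb
  exact ⟨b, by
    rintro _ ⟨s, rfl⟩
    exact le_infConv (fun y => hb ⟨Fin.cons s y, rfl⟩) halfSqNorm_nonneg x⟩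

theorem convexOn_infConvTail {h : (Fin (n + 1) → ℝ) → ℝ} (hh : ConvexOn ℝ univ h)
    (hb : BddBelow (range h)) (x : Fin n → ℝ) : ConvexOn ℝ univ (infConvTail h x) := by
  refine convexOn_ciInf_of_convexOn_uncurry ?_ fun s =>
    bddBelow_range_add_comp_sub (bddBelow_range_comp_cons hb s) halfSqNorm_nonneg x
  have hcons := hh.comp_linearMap (Fin.consLinearEquiv ℝ fun _ : Fin (n + 1) => ℝ).toLinearMap
  have hdist := convexOn_halfSqNorm.comp_affineMap
    (AffineMap.const ℝ (ℝ × (Fin n → ℝ)) x - (LinearMap.snd ℝ ℝ (Fin n → ℝ)).toAffineMap)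
  exact hcons.add hdist

theorem infConv_cons_le_infConv_infConvTail {h : (Fin (n + 1) → ℝ) → ℝ}
    (hb : BddBelow (range h)) (u : ℝ) (x : Fin n → ℝ) :
    infConv h halfSqNorm (Fin.cons u x) ≤ infConv (infConvTail h x) (· ^ 2 / 2) u := by
  refine le_ciInf fun s => ?_
  rw [← sub_le_iff_le_add]
  refine le_ciInf fun y => ?_
  have hQ := infConv_le hb halfSqNorm_nonneg (Fin.cons u x) (Fin.cons s y)
  rw [halfSqNorm_cons_sub_cons] at hQ
  linarith

end Cube

theorem sum_exp_infConv_mul_sum_exp_neg_le {n : ℕ} {h : (Fin n → ℝ) → ℝ}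
    (hh : ConvexOn ℝ univ h) (hb : BddBelow (range h)) :
    (∑ ε : Fin n → Bool, exp (infConv h halfSqNorm (bitVec ε)))
      * ∑ ε : Fin n → Bool, exp (-h (bitVec ε)) ≤ 4 ^ n := by
  induction n with
  | zero =>
    rw [Fintype.sum_unique, Fintype.sum_unique, ← exp_add, pow_zero, exp_le_one_iff,
      ← sub_eq_add_neg, sub_nonpos]
    exact infConv_le_self hb halfSqNorm_nonneg (by simp [halfSqNorm]) _
  | succ n ih =>
    set Z₀ := ∑ ε : Fin n → Bool, exp (-h (Fin.cons 0 (bitVec ε)))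
    set Z₁ := ∑ ε : Fin n → Bool, exp (-h (Fin.cons 1 (bitVec ε)))
    have hZ : 0 < Z₀ + Z₁ := by positivity
    have ih₀ : (∑ ε, exp (infConvTail h (bitVec ε) 0)) * Z₀ ≤ 4 ^ n :=
      ih (convexOn_comp_cons hh 0) (bddBelow_range_comp_cons hb 0)
    have ih₁ : (∑ ε, exp (infConvTail h (bitVec ε) 1)) * Z₁ ≤ 4 ^ n :=
      ih (convexOn_comp_cons hh 1) (bddBelow_range_comp_cons hb 1)
    have hslice (x : Fin n → ℝ) :
        (exp (infConv h halfSqNorm (Fin.cons 0 x)) + exp (infConv h halfSqNorm (Fin.cons 1 x)))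
          * (Z₀ + Z₁) ^ 2
          ≤ 4 * (Z₀ ^ 2 * exp (infConvTail h x 0) + Z₁ ^ 2 * exp (infConvTail h x 1)) := by
      refine le_trans ?_ (exp_infConv_add_exp_infConv_mul_sq_le (convexOn_infConvTail hh hb x)
        (bddBelow_range_infConvTail hb x) Z₀ Z₁)
      gcongr <;> exact infConv_cons_le_infConv_infConvTail hb _ x
    have hsum := Finset.sum_le_sum fun ε (_ : ε ∈ Finset.univ) => hslice (bitVec ε)
    simp only [← Finset.sum_mul, ← Finset.mul_sum, Finset.sum_add_distrib] at hsum
    rw [sum_bitVec_succ fun v => exp (infConv h halfSqNorm v), sum_bitVec_succ fun v => exp (-h v)]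
    refine le_of_mul_le_mul_right ?_ hZ
    calc _ = ((∑ ε : Fin n → Bool, exp (infConv h halfSqNorm (Fin.cons 0 (bitVec ε))))
            + ∑ ε : Fin n → Bool, exp (infConv h halfSqNorm (Fin.cons 1 (bitVec ε))))
            * (Z₀ + Z₁) ^ 2 := by ring
      _ ≤ 4 * (Z₀ * ((∑ ε, exp (infConvTail h (bitVec ε) 0)) * Z₀)
            + Z₁ * ((∑ ε, exp (infConvTail h (bitVec ε) 1)) * Z₁)) := by linarith
      _ ≤ 4 * (Z₀ * 4 ^ n + Z₁ * 4 ^ n) := by gcongr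
      _ = 4 ^ (n + 1) * (Z₀ + Z₁) := by ring

theorem sub_sq_div_two_le_infConv {n : ℕ} {h : (Fin n → ℝ) → ℝ} {L : ℝ}
    (hL : ∀ x y, h x - h y ≤ L * √(∑ j, (x j - y j) ^ 2)) (x : Fin n → ℝ) :
    h x - L ^ 2 / 2 ≤ infConv h halfSqNorm x := by
  refine le_ciInf fun y => ?_
  have hr : √(∑ j, (x j - y j) ^ 2) ^ 2 = 2 * halfSqNorm (x - y) := by
    rw [sq_sqrt (by positivity), halfSqNorm]
    simp only [Pi.sub_apply]
    ring
  nlinarith [hL x y, sq_nonneg (L - √(∑ j, (x j - y j) ^ 2))]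

theorem sum_exp_mul_sum_exp_neg_le {n : ℕ} {h : (Fin n → ℝ) → ℝ} {L : ℝ}
    (hh : ConvexOn ℝ univ h) (hb : BddBelow (range h))
    (hL : ∀ x y, h x - h y ≤ L * √(∑ j, (x j - y j) ^ 2)) :
    (∑ ε : Fin n → Bool, exp (h (bitVec ε))) * ∑ ε : Fin n → Bool, exp (-h (bitVec ε))
      ≤ 4 ^ n * exp (L ^ 2 / 2) := by
  have hQ (ε : Fin n → Bool) :
      exp (h (bitVec ε)) ≤ exp (L ^ 2 / 2) * exp (infConv h halfSqNorm (bitVec ε)) := by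
    rw [← exp_add]
    gcongr
    linarith [sub_sq_div_two_le_infConv hL (bitVec ε)]
  calc (∑ ε : Fin n → Bool, exp (h (bitVec ε))) * ∑ ε : Fin n → Bool, exp (-h (bitVec ε))
      ≤ (∑ ε : Fin n → Bool, exp (L ^ 2 / 2) * exp (infConv h halfSqNorm (bitVec ε)))
          * ∑ ε : Fin n → Bool, exp (-h (bitVec ε)) := by
        gcongr with ε
        exact hQ ε
    _ = exp (L ^ 2 / 2) * ((∑ ε : Fin n → Bool, exp (infConv h halfSqNorm (bitVec ε)))
          * ∑ ε : Fin n → Bool, exp (-h (bitVec ε))) := by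
        rw [← Finset.mul_sum, mul_assoc]
    _ ≤ exp (L ^ 2 / 2) * 4 ^ n := by gcongr; exact sum_exp_infConv_mul_sum_exp_neg_le hh hb
    _ = 4 ^ n * exp (L ^ 2 / 2) := mul_comm _ _

section Orthogonal

variable {d : ℕ}

theorem l1Norm_nonneg (v : Fin d → ℝ) : 0 ≤ l1Norm v :=
  Finset.sum_nonneg fun _ _ => abs_nonneg _

theorem l1Norm_le_sqrt_mul_sqrt_sum_sq (v : Fin d → ℝ) : l1Norm v ≤ √d * √(∑ j, v j ^ 2) := by
  rw [← sqrt_mul (Nat.cast_nonneg d)]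
  refine le_sqrt_of_sq_le ?_
  simpa [l1Norm, sq_abs] using sq_sum_le_card_mul_sum_sq (s := Finset.univ) (f := fun j => |v j|)

theorem convexOn_l1Norm_mulVec (O : Matrix (Fin d) (Fin d) ℝ) :
    ConvexOn ℝ univ fun x => l1Norm (O *ᵥ x) := by
  have hnorm : (fun x => l1Norm (O *ᵥ x))
      = (‖·‖) ∘ ((WithLp.linearEquiv 1 ℝ (Fin d → ℝ)).symm.toLinearMap ∘ₗ O.mulVecLin) := by
    ext x
    simp [l1Norm, PiLp.norm_eq_of_L1]
  rw [hnorm]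
  exact (convexOn_norm convex_univ).comp_linearMap _

theorem sum_sq_mulVec {O : Matrix (Fin d) (Fin d) ℝ} (hO : IsOrthogonalMat O) (v : Fin d → ℝ) :
    ∑ i, (O *ᵥ v) i ^ 2 = ∑ j, v j ^ 2 := by
  have hdot : (O *ᵥ v) ⬝ᵥ (O *ᵥ v) = v ⬝ᵥ v := by
    rw [Matrix.dotProduct_mulVec, ← Matrix.mulVec_transpose, Matrix.mulVec_mulVec, hO.1,
      Matrix.one_mulVec, dotProduct_comm]
  simpa [dotProduct, sq] using hdot

theorem l1Norm_mulVec_sub_le {O : Matrix (Fin d) (Fin d) ℝ} (hO : IsOrthogonalMat O)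
    (x y : Fin d → ℝ) :
    l1Norm (O *ᵥ x) - l1Norm (O *ᵥ y) ≤ √d * √(∑ j, (x j - y j) ^ 2) :=
  calc l1Norm (O *ᵥ x) - l1Norm (O *ᵥ y) ≤ l1Norm (O *ᵥ (x - y)) := by
        rw [l1Norm, l1Norm, l1Norm, ← Finset.sum_sub_distrib, Matrix.mulVec_sub]
        gcongr with i
        exact abs_sub_abs_le_abs_sub _ _
    _ ≤ √d * √(∑ i, (O *ᵥ (x - y)) i ^ 2) := l1Norm_le_sqrt_mul_sqrt_sum_sq _
    _ = √d * √(∑ j, (x j - y j) ^ 2) := by rw [sum_sq_mulVec hO]; rfl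

theorem sum_exp_mul_sum_exp_neg_l1Norm_mulVec_le {O : Matrix (Fin d) (Fin d) ℝ}
    (hO : IsOrthogonalMat O) (t : ℝ) :
    (∑ x : Fin d → Bool, exp (t * l1Norm (O *ᵥ bitVec x)))
        * ∑ x : Fin d → Bool, exp (-(t * l1Norm (O *ᵥ bitVec x)))
      ≤ 4 ^ d * exp (t ^ 2 * d / 2) := by
  have hpos {s : ℝ} (hs : 0 ≤ s) :
      (∑ x : Fin d → Bool, exp (s * l1Norm (O *ᵥ bitVec x)))
          * ∑ x : Fin d → Bool, exp (-(s * l1Norm (O *ᵥ bitVec x)))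
        ≤ 4 ^ d * exp (s ^ 2 * d / 2) := by
    refine (sum_exp_mul_sum_exp_neg_le (L := s * √d) ((convexOn_l1Norm_mulVec O).smul hs)
      ⟨0, ?_⟩ fun x y => ?_).trans_eq ?_
    · rintro _ ⟨x, rfl⟩
      exact mul_nonneg hs (l1Norm_nonneg _)
    · simpa only [smul_eq_mul, ← mul_sub, mul_assoc] using
        mul_le_mul_of_nonneg_left (l1Norm_mulVec_sub_le hO x y) hs
    · rw [mul_pow, sq_sqrt (Nat.cast_nonneg d), mul_div_assoc]
  rcases le_total 0 t with ht | ht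
  · exact hpos ht
  · have hneg := hpos (neg_nonneg.2 ht)
    simp only [neg_mul, neg_neg, neg_sq] at hneg
    linarith [mul_comm (∑ x : Fin d → Bool, exp (t * l1Norm (O *ᵥ bitVec x)))
      (∑ x : Fin d → Bool, exp (-(t * l1Norm (O *ᵥ bitVec x))))]

end Orthogonal

theorem inv_card_mul_sum_exp_sub_mean_le {ι : Type*} [Fintype ι] [Nonempty ι] (g : ι → ℝ)
    (t : ℝ) :
    (Fintype.card ι : ℝ)⁻¹ * ∑ i, exp (t * (g i - (Fintype.card ι : ℝ)⁻¹ * ∑ j, g j))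
      ≤ ((Fintype.card ι : ℝ)⁻¹ * ∑ i, exp (t * g i))
        * ((Fintype.card ι : ℝ)⁻¹ * ∑ i, exp (-(t * g i))) := by
  set w := (Fintype.card ι : ℝ)⁻¹
  have hw : 0 ≤ w := by positivity
  have hjensen : exp (-(t * (w * ∑ j, g j))) ≤ w * ∑ i, exp (-(t * g i)) := by
    have := convexOn_exp.map_sum_le (t := Finset.univ) (w := fun _ => w) (p := fun i => -(t * g i))
      (fun _ _ => hw) (by simp [w]) (fun _ _ => mem_univ _)
    simpa only [smul_eq_mul, ← Finset.mul_sum, Finset.sum_neg_distrib, mul_neg,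
      mul_left_comm w t] using this
  calc w * ∑ i, exp (t * (g i - w * ∑ j, g j))
      = (w * ∑ i, exp (t * g i)) * exp (-(t * (w * ∑ j, g j))) := by
        rw [mul_assoc, Finset.sum_mul]
        simp only [← exp_add]
        ring_nf
    _ ≤ (w * ∑ i, exp (t * g i)) * (w * ∑ i, exp (-(t * g i))) := by gcongr

theorem l1_norm_rotated_cube_subgaussian_general (d : ℕ)
    (O : Matrix (Fin d) (Fin d) ℝ) (hO : IsOrthogonalMat O)
    (μ : ℝ) (hμ : μ = ((2 : ℝ) ^ d)⁻¹ * ∑ x : Fin d → Bool, l1Norm (O.mulVec (bitVec x)))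
    (t : ℝ) :
    ((2 : ℝ) ^ d)⁻¹ *
        ∑ x : Fin d → Bool, Real.exp (t * (l1Norm (O.mulVec (bitVec x)) - μ))
      ≤ Real.exp (t ^ 2 * d / 2) := by
  have hcard : (Fintype.card (Fin d → Bool) : ℝ) = 2 ^ d := by simp
  have hcentered := inv_card_mul_sum_exp_sub_mean_le (fun x => l1Norm (O *ᵥ bitVec x)) t
  rw [hcard, ← hμ] at hcentered
  calc ((2 : ℝ) ^ d)⁻¹ * ∑ x : Fin d → Bool, exp (t * (l1Norm (O *ᵥ bitVec x) - μ))
      ≤ ((2 : ℝ) ^ d)⁻¹ ^ 2 * ((∑ x : Fin d → Bool, exp (t * l1Norm (O *ᵥ bitVec x)))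
          * ∑ x : Fin d → Bool, exp (-(t * l1Norm (O *ᵥ bitVec x)))) := by
        linarith
    _ ≤ ((2 : ℝ) ^ d)⁻¹ ^ 2 * (4 ^ d * exp (t ^ 2 * d / 2)) :=
        mul_le_mul_of_nonneg_left (sum_exp_mul_sum_exp_neg_l1Norm_mulVec_le hO t)
          (by positivity)
    _ = exp (t ^ 2 * d / 2) := by
        rw [show (4 : ℝ) ^ d = (2 ^ d) ^ 2 by rw [← pow_mul, mul_comm, pow_mul]; norm_num]
        field_simp

/-- for `x` uniform on `{0,1}^d`, the random variable `‖Ox‖₁` is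
subgaussian with variance proxy `d`: its centered moment generating function is
bounded by `exp(t²d/2)`. -/
theorem l1_norm_rotated_cube_subgaussian (d : ℕ) (hd : 1 ≤ d)
    (O : Matrix (Fin d) (Fin d) ℝ) (hO : IsOrthogonalMat O)
    (μ : ℝ) (hμ : μ = ((2 : ℝ) ^ d)⁻¹ * ∑ x : Fin d → Bool, l1Norm (O.mulVec (bitVec x)))
    (t : ℝ) :
    ((2 : ℝ) ^ d)⁻¹ *
        ∑ x : Fin d → Bool, Real.exp (t * (l1Norm (O.mulVec (bitVec x)) - μ))
      ≤ Real.exp (t ^ 2 * d / 2) :=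
  l1_norm_rotated_cube_subgaussian_general d O hO μ hμ t
end

section
/- Let (Ω, P) be a probability space, let d ≥ 1, a > 0, μ ∈ ℝ^d, and let N be a natural number with N ≥ 18·ln(6d). Let v_1,…,v_N : Ω → ℝ^d be independent random vectors such that for every i ∈ {1,…,N} and every coordinate j ∈ {1,…,d}, P[ |v_i[j] − μ_j| ≤ a ] ≥ 5/6. Then with probability at least 5/6, for every coordinate j strictly more than N/2 of the indices i satisfy |v_i[j] − μ_j| ≤ a; consequently, on this event every coordinatewise median m of v_1,…,v_N satisfies |m_j − μ_j| ≤ a for all j, i.e., ‖m − μ‖_∞ ≤ a. -/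
/-!
For each coordinate `j`, the events `|v i j - μ j| ≤ a` are independent with probability at least
`5/6`, so by Hoeffding's inequality at most `N/2` of them occur with probability at most
`exp (-2N/9) ≤ exp (-N/18) ≤ 1/(6d)`; a union bound over the `d` coordinates gives the first claim.
On the complementary event more than half of the samples of each coordinate are good, while at
least half lie on each side of the median `m j`; by pigeonhole a good sample lies on each side of
`m j`, which traps `m j` within `a` of `μ j`.
-/

open MeasureTheory ProbabilityTheory Real Finset
open scoped Classical

section Hoeffding

variable {Ω ι : Type*} [MeasurableSpace Ω] {P : Measure Ω} [IsProbabilityMeasure P]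

theorem measureReal_sum_le_sum_integral_sub_le {X : ι → Ω → ℝ} (hX : iIndepFun X P)
    (hm : ∀ i, Measurable (X i)) {lo hi : ℝ} (hbdd : ∀ i ω, X i ω ∈ Set.Icc lo hi)
    (s : Finset ι) {t : ℝ} (ht : 0 ≤ t) :
    P.real {ω | ∑ i ∈ s, X i ω ≤ ∑ i ∈ s, P[X i] - t} ≤
      exp (-2 * t ^ 2 / (#s * (hi - lo) ^ 2)) := by
  have hindep : iIndepFun (fun i ω => P[X i] - X i ω) P :=
    show iIndepFun (fun i => (fun x => P[X i] - x) ∘ X i) P from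
    hX.comp (fun i x => P[X i] - x) fun _ => measurable_const.sub measurable_id
  have hsubG : ∀ i ∈ s, HasSubgaussianMGF (fun ω => P[X i] - X i ω) ((‖hi - lo‖₊ / 2) ^ 2) P :=
    fun i _ => (hasSubgaussianMGF_of_mem_Icc (hm i).aemeasurable
      (ae_of_all _ (hbdd i))).neg.congr (ae_of_all _ fun ω => by simp)
  have hset : {ω | ∑ i ∈ s, X i ω ≤ ∑ i ∈ s, P[X i] - t} =
      {ω | t ≤ ∑ i ∈ s, (P[X i] - X i ω)} := by
    ext ω
    simp only [Set.mem_ofPred_eq, sum_sub_distrib]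
    constructor <;> intro h <;> linarith
  rw [hset]
  refine (HasSubgaussianMGF.measure_sum_ge_le_of_iIndepFun hindep hsubG ht).trans_eq ?_
  congr 1
  simp only [sum_const, nsmul_eq_mul]
  push_cast [Real.norm_eq_abs]
  rw [div_pow, sq_abs,
    show (2 : ℝ) * (#s * ((hi - lo) ^ 2 / 2 ^ 2)) = #s * (hi - lo) ^ 2 / 2 by ring,
    div_div_eq_mul_div]
  ring

theorem measureReal_card_le_le_of_iIndepFun [Fintype ι] {β : Type*} [MeasurableSpace β]
    {Y : ι → Ω → β} (hY : iIndepFun Y P) (hm : ∀ i, Measurable (Y i)) {S : Set β}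
    (hS : MeasurableSet S) {p t k : ℝ} (hp : ∀ i, p ≤ P.real (Y i ⁻¹' S)) (ht : 0 ≤ t)
    (hk : k ≤ Fintype.card ι * (p - t)) :
    P.real {ω | (#{i | Y i ω ∈ S} : ℝ) ≤ k} ≤ exp (-2 * Fintype.card ι * t ^ 2) := by
  set n : ℝ := (Fintype.card ι : ℝ)
  set X : ι → Ω → ℝ := fun i => (Y i ⁻¹' S).indicator 1
  have hX : iIndepFun X P :=
    show iIndepFun (fun i => S.indicator 1 ∘ Y i) P from
      hY.comp _ fun _ => measurable_const.indicator hS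
  have hXm : ∀ i, Measurable (X i) := fun i => measurable_const.indicator (hm i hS)
  have hXbdd : ∀ i ω, X i ω ∈ Set.Icc (0 : ℝ) 1 := fun i ω => by
    by_cases h : ω ∈ Y i ⁻¹' S <;> simp [X, h]
  have hcount : ∀ ω, (#{i | Y i ω ∈ S} : ℝ) = ∑ i, X i ω := fun ω => by
    rw [natCast_card_filter]
    simp [X, Set.indicator_apply]
  have hmean : n * p ≤ ∑ i, P[X i] := by
    calc n * p = ∑ _i : ι, p := by simp [n]
      _ ≤ ∑ i, P[X i] := sum_le_sum fun i _ => by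
        simpa [X, integral_indicator_one (hm i hS)] using hp i
  calc P.real {ω | (#{i | Y i ω ∈ S} : ℝ) ≤ k}
      ≤ P.real {ω | ∑ i, X i ω ≤ ∑ i, P[X i] - n * t} :=
        measureReal_mono fun ω (hω : _ ≤ k) => by
          simp only [Set.mem_ofPred_eq, ← hcount]
          nlinarith
    _ ≤ exp (-2 * (n * t) ^ 2 / (n * (1 - 0) ^ 2)) :=
        measureReal_sum_le_sum_integral_sub_le hX hXm hXbdd univ (by positivity)
    _ = exp (-2 * n * t ^ 2) := by
        rcases eq_or_ne n 0 with hn | hn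
        · simp [hn]
        · congr 1
          field_simp
          ring

theorem measureReal_exists_card_le_le_of_iIndepFun [Fintype ι] {κ β : Type*} [Fintype κ]
    [MeasurableSpace β] {Y : ι → Ω → β} (hY : iIndepFun Y P) (hm : ∀ i, Measurable (Y i))
    {S : κ → Set β} (hS : ∀ j, MeasurableSet (S j)) {p t k : ℝ}
    (hp : ∀ i j, p ≤ P.real (Y i ⁻¹' S j)) (ht : 0 ≤ t) (hk : k ≤ Fintype.card ι * (p - t)) :
    P.real {ω | ∃ j, (#{i | Y i ω ∈ S j} : ℝ) ≤ k} ≤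
      Fintype.card κ * exp (-2 * Fintype.card ι * t ^ 2) := by
  rw [Set.ofPred_exists]
  refine (measureReal_iUnion_fintype_le _).trans ?_
  calc ∑ j, P.real {ω | (#{i | Y i ω ∈ S j} : ℝ) ≤ k}
      ≤ ∑ _j : κ, exp (-2 * Fintype.card ι * t ^ 2) := sum_le_sum fun j _ =>
        measureReal_card_le_le_of_iIndepFun hY hm (hS j) (fun i => hp i j) ht hk
    _ = Fintype.card κ * exp (-2 * Fintype.card ι * t ^ 2) := by simp

end Hoeffding

theorem abs_sub_le_of_card_filter {ι : Type*} [Fintype ι] (x : ι → ℝ) {c a m : ℝ}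
    (hgood : (Fintype.card ι : ℝ) / 2 < #{i | |x i - c| ≤ a})
    (hle : (Fintype.card ι : ℝ) / 2 ≤ #{i | x i ≤ m})
    (hge : (Fintype.card ι : ℝ) / 2 ≤ #{i | m ≤ x i}) :
    |m - c| ≤ a := by
  have meets : ∀ T : Finset ι, (Fintype.card ι : ℝ) / 2 ≤ #T → ∃ i ∈ T, |x i - c| ≤ a := by
    intro T hT
    have hcard : #(univ : Finset ι) < #{i | |x i - c| ≤ a} + #T := by
      rw [card_univ]
      exact_mod_cast (by linarith : (Fintype.card ι : ℝ) < #{i | |x i - c| ≤ a} + #T)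
    obtain ⟨i, hi⟩ := inter_nonempty_of_card_lt_card_add_card (subset_univ _) (subset_univ T) hcard
    simp only [mem_inter, mem_filter_univ] at hi
    exact ⟨i, hi.2, hi.1⟩
  obtain ⟨i, hi, hxi⟩ := meets _ hle
  obtain ⟨k, hk, hxk⟩ := meets _ hge
  rw [mem_filter_univ] at hi hk
  rw [abs_le] at hxi hxk ⊢
  constructor <;> linarith

theorem mul_exp_neg_le_one_sixth {d N : ℝ} (hd : 0 < d) (hN0 : 0 ≤ N)
    (hN : 18 * log (6 * d) ≤ N) : d * exp (-2 * N * (1 / 3) ^ 2) ≤ 1 / 6 := by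
  calc d * exp (-2 * N * (1 / 3) ^ 2) ≤ d * exp (-log (6 * d)) := by gcongr; nlinarith
    _ = 1 / 6 := by rw [exp_neg, exp_log (by positivity)]; field_simp

theorem median_amplification_general {Ω : Type*} [MeasurableSpace Ω]
    (P : Measure Ω) [IsProbabilityMeasure P]
    (d : ℕ) (hd : 1 ≤ d) (a : ℝ) (μ : Fin d → ℝ)
    (N : ℕ) (hN : 18 * Real.log (6 * d) ≤ (N : ℝ))
    (v : Fin N → Ω → Fin d → ℝ)
    (hmeas : ∀ i, Measurable (v i))
    (hindep : iIndepFun v P)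
    (hgood : ∀ i j, ENNReal.ofReal (5 / 6) ≤ P {ω | |v i ω j - μ j| ≤ a}) :
    ENNReal.ofReal (5 / 6) ≤ P {ω | ∀ j, (N : ℝ) / 2 <
        ((Finset.univ.filter fun i => |v i ω j - μ j| ≤ a).card : ℝ)} ∧
    ∀ ω, (∀ j, (N : ℝ) / 2 <
        ((Finset.univ.filter fun i => |v i ω j - μ j| ≤ a).card : ℝ)) →
      ∀ m : Fin d → ℝ,
        (∀ j, (N : ℝ) / 2 ≤ ((Finset.univ.filter fun i => v i ω j ≤ m j).card : ℝ) ∧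
              (N : ℝ) / 2 ≤ ((Finset.univ.filter fun i => m j ≤ v i ω j).card : ℝ)) →
        ∀ j, |m j - μ j| ≤ a := by
  refine ⟨?_, fun ω hω m hm j => ?_⟩
  · set G := {ω | ∀ j, (N : ℝ) / 2 <
        ((Finset.univ.filter fun i => |v i ω j - μ j| ≤ a).card : ℝ)}
    have hbad : P.real Gᶜ ≤ d * exp (-2 * N * (1 / 3) ^ 2) := by
      simpa [G, Set.compl_ofPred] using
        measureReal_exists_card_le_le_of_iIndepFun hindep hmeas
          (S := fun j => {y | |y j - μ j| ≤ a})
          (fun j => measurableSet_le (by fun_prop) (by fun_prop))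
          (p := 5 / 6) (t := 1 / 3) (k := N / 2)
          (fun i j => (ENNReal.ofReal_le_iff_le_toReal (measure_ne_top _ _)).1 (hgood i j))
          (by norm_num) (by rw [Fintype.card_fin]; linarith)
    have hsmall : (d : ℝ) * exp (-2 * N * (1 / 3) ^ 2) ≤ 1 / 6 :=
      mul_exp_neg_le_one_sixth (by exact_mod_cast hd) N.cast_nonneg hN
    have hcover : 1 ≤ P.real G + P.real Gᶜ := by
      simpa using measureReal_union_le (μ := P) G Gᶜ
    rw [ENNReal.ofReal_le_iff_le_toReal (measure_ne_top _ _), ← measureReal_def]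
    linarith
  · exact abs_sub_le_of_card_filter (fun i => v i ω j)
      (by simpa using hω j) (by simpa using (hm j).1) (by simpa using (hm j).2)

/-- median amplification. If each of `N ≥ 18·ln(6d)` independent random
vectors has each coordinate within `a` of `μ` with probability at least `5/6`, then
with probability at least `5/6` every coordinate has strictly more than `N/2` good
indices; and on that event every coordinatewise median is within `a` of `μ` in
`ℓ_∞`-norm. -/
theorem median_amplification {Ω : Type*} [MeasurableSpace Ω]
    (P : Measure Ω) [IsProbabilityMeasure P]
    (d : ℕ) (hd : 1 ≤ d) (a : ℝ) (ha : 0 < a) (μ : Fin d → ℝ)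
    (N : ℕ) (hN : 18 * Real.log (6 * d) ≤ (N : ℝ))
    (v : Fin N → Ω → Fin d → ℝ)
    (hmeas : ∀ i, Measurable (v i))
    (hindep : iIndepFun v P)
    (hgood : ∀ i j, ENNReal.ofReal (5 / 6) ≤ P {ω | |v i ω j - μ j| ≤ a}) :
    ENNReal.ofReal (5 / 6) ≤ P {ω | ∀ j, (N : ℝ) / 2 <
        ((Finset.univ.filter fun i => |v i ω j - μ j| ≤ a).card : ℝ)} ∧
    ∀ ω, (∀ j, (N : ℝ) / 2 <
        ((Finset.univ.filter fun i => |v i ω j - μ j| ≤ a).card : ℝ)) →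
      ∀ m : Fin d → ℝ,
        (∀ j, (N : ℝ) / 2 ≤ ((Finset.univ.filter fun i => v i ω j ≤ m j).card : ℝ) ∧
              (N : ℝ) / 2 ≤ ((Finset.univ.filter fun i => m j ≤ v i ω j).card : ℝ)) →
        ∀ j, |m j - μ j| ≤ a :=
  median_amplification_general P d hd a μ N hN v hmeas hindep hgood
end
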